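/- arXiv:2401.12641 — 11 statements merged into one kernel-verified Lean document; each statement's English description precedes it below -/
import Mathlib

section
/- Let f : (ℕ→ℕ) → Set (ℕ→ℕ) be a problem. The following are equivalent: (1) there exists a first-order problem g : (ℕ→ℕ) → Set ℕ such that g ≤_W* f and g is discontinuous; (2) there exist a point a and a sequence (a_n) in Baire space with a_n → a, such that a ∈ dom f, a_n ∈ dom f for every n, and the restriction of f to S = {a_n | n ∈ ℕ} ∪ {a} is discontinuous (i.e. there is no F : (ℕ→ℕ) → (ℕ→ℕ) continuous on S with F x ∈ f x for all x ∈ S); (3) ACC_ℕ ≤_W* f. -/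
/-- The domain of a problem (multivalued function on Baire space). -/
def domP (f : (ℕ → ℕ) → Set (ℕ → ℕ)) : Set (ℕ → ℕ) := {p | f p ≠ ∅}

/-- The domain of a first-order problem. -/
def domFO (f : (ℕ → ℕ) → Set ℕ) : Set (ℕ → ℕ) := {p | f p ≠ ∅}

/-- The problem `ACC_ℕ`: on inputs taking at most one nonzero value, find a number
not enumerated (where `p k = n + 1` means `n` is enumerated); empty elsewhere. -/
def ACCN (p : ℕ → ℕ) : Set ℕ :=
  {n | (∀ i j, p i ≠ 0 → p j ≠ 0 → p i = p j) ∧ ∀ k, p k ≠ n + 1}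

/-- Continuous Weihrauch reducibility of a first-order problem `g` to a problem `f`. -/
def RedFO (g : (ℕ → ℕ) → Set ℕ) (f : (ℕ → ℕ) → Set (ℕ → ℕ)) : Prop :=
  ∃ (H : (ℕ → ℕ) → (ℕ → ℕ)) (K : (ℕ → ℕ) × (ℕ → ℕ) → ℕ),
    ContinuousOn H (domFO g) ∧
    ContinuousOn K {pq : (ℕ → ℕ) × (ℕ → ℕ) | pq.1 ∈ domFO g ∧ pq.2 ∈ f (H pq.1)} ∧
    (∀ p ∈ domFO g, H p ∈ domP f) ∧
    (∀ p ∈ domFO g, ∀ q ∈ f (H p), K (p, q) ∈ g p)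

/-- Continuity of a first-order problem: it has a choice function continuous on its domain. -/
def FOContinuous (g : (ℕ → ℕ) → Set ℕ) : Prop :=
  ∃ F : (ℕ → ℕ) → ℕ, ContinuousOn F (domFO g) ∧ ∀ p ∈ domFO g, F p ∈ g p

/-- `f` restricted to some convergent sequence (together with its limit) inside
its domain is discontinuous. -/
def DiscOnSeq (f : (ℕ → ℕ) → Set (ℕ → ℕ)) : Prop :=
  ∃ (a : ℕ → ℕ) (aseq : ℕ → (ℕ → ℕ)),
    Filter.Tendsto aseq Filter.atTop (nhds a) ∧
    a ∈ domP f ∧ (∀ n, aseq n ∈ domP f) ∧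
    ¬ ∃ F : (ℕ → ℕ) → (ℕ → ℕ),
        ContinuousOn F (Set.range aseq ∪ {a}) ∧
        ∀ x ∈ Set.range aseq ∪ {a}, F x ∈ f x

/-!
(1 ⇒ 2) On Baire space, answers that are correct on a whole cylinder glue, via the shortest such
cylinder around each point, to a continuous choice. So a discontinuous first-order `g` has a point
`p` near which no answer is locally correct, hence inputs `p_k → p` along which every answer fails
infinitely often; the forward functional of a reduction `g ≤ f` maps them to a convergent sequence
on which no continuous selector for `f` exists, since the backward functional would stabilise.

(2 ⇒ 3) If `f` has no continuous selector on `{a_k} ∪ {a}`, every solution `q ∈ f a` has a *thin*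
prefix: a cylinder avoided by all solutions of infinitely many `a_k` (otherwise solutions of `a_k`
could be chosen converging to `q`). The reduction sends the zero instance to `a` and answers with
the code of the shortest thin prefix of the solution; an instance enumerating `v` at time `j` is
sent to some `a_k`, `k ≥ j`, none of whose solutions lies in the cylinder coded by `v`, so `v` is
never answered.

(3 ⇒ 1) `ACC_ℕ` is itself discontinuous at the zero instance.
-/

open Filter Topology Set PiNat Encodable

theorem PiNat.hasBasis_nhds_cylinder {E : ℕ → Type*} [∀ n, TopologicalSpace (E n)]
    [∀ n, DiscreteTopology (E n)] (x : ∀ n, E n) :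
    (𝓝 x).HasBasis (fun _ => True) (cylinder x) := by
  refine ⟨fun s => ⟨fun hs => ?_, fun ⟨n, _, hn⟩ =>
    mem_of_superset ((isOpen_cylinder E x n).mem_nhds (self_mem_cylinder x n)) hn⟩⟩
  obtain ⟨_, ⟨y, n, rfl⟩, hx, hs⟩ := (isTopologicalBasis_cylinders E).mem_nhds_iff.1 hs
  exact ⟨n, trivial, by rwa [mem_cylinder_iff_eq.1 hx]⟩

theorem PiNat.res_eq_of_mem_cylinder {α : Type*} {x y : ℕ → α} {m n : ℕ}
    (h : y ∈ cylinder x n) (hm : m ≤ n) : res y m = res x m :=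
  res_eq_res.2 fun _ hi => h _ (hi.trans_le hm)

theorem Nat.sInf_eq_of_forall_le_iff {s t : Set ℕ} {m : ℕ} (hm : m ∈ s)
    (hst : ∀ k ≤ m, k ∈ s ↔ k ∈ t) : sInf s = sInf t := by
  have hs : sInf s ≤ m := Nat.sInf_le hm
  have ht : sInf s ∈ t := (hst _ hs).1 (Nat.sInf_mem ⟨m, hm⟩)
  have hts : sInf t ≤ sInf s := Nat.sInf_le ht
  exact le_antisymm (Nat.sInf_le ((hst _ (hts.trans hs)).2 (Nat.sInf_mem ⟨_, ht⟩))) hts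

theorem continuousOn_range_union_singleton_of_tendsto {X Y : Type*} [TopologicalSpace X]
    [T2Space X] [TopologicalSpace Y] {u : ℕ → X} {a : X} (hu : Tendsto u atTop (𝓝 a))
    {F : X → Y} (hF : Tendsto (F ∘ u) atTop (𝓝 (F a))) : ContinuousOn F (range u ∪ {a}) := by
  intro x _
  by_cases hxa : x = a
  · subst hxa
    intro W hW
    obtain ⟨N, hN⟩ := eventually_atTop.1 (hF hW)
    have hfin : (u '' {k | k < N ∧ F (u k) ∉ W}).Finite :=
      ((finite_lt_nat N).subset fun _ hk => hk.1).image u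
    rw [mem_map, mem_nhdsWithin]
    refine ⟨_, hfin.isClosed.isOpen_compl, ?_, ?_⟩
    · rintro ⟨k, ⟨-, hk⟩, rfl⟩
      exact hk (mem_of_mem_nhds hW)
    · rintro y ⟨hyB, ⟨k, rfl⟩ | rfl⟩
      · by_contra hy
        exact hyB ⟨k, ⟨lt_of_not_ge fun h => hy (hN k h), hy⟩, rfl⟩
      · exact mem_preimage.2 (mem_of_mem_nhds hW)
  · -- `x` is isolated in `range u ∪ {a}`: the tail of `u` stays in a neighbourhood of `a`
    refine continuousWithinAt_singleton.mono_of_mem_nhdsWithin ?_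
    obtain ⟨U, V, hU, hV, hxU, haV, hUV⟩ := t2_separation hxa
    obtain ⟨N, hN⟩ := eventually_atTop.1 (hu (hV.mem_nhds haV))
    have hfin : (u '' Iio N \ {x}).Finite := ((finite_Iio N).image u).sdiff
    rw [mem_nhdsWithin]
    refine ⟨U ∩ (u '' Iio N \ {x})ᶜ, hU.inter hfin.isClosed.isOpen_compl,
      ⟨hxU, fun h => h.2 rfl⟩, ?_⟩
    rintro y ⟨⟨hyU, hyB⟩, ⟨k, rfl⟩ | rfl⟩
    · by_contra hy
      by_cases hk : N ≤ k
      · exact disjoint_left.1 hUV hyU (hN k hk)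
      · exact hyB ⟨⟨k, not_le.1 hk, rfl⟩, hy⟩
    · exact (disjoint_left.1 hUV hyU haV).elim

theorem foContinuous_of_forall_exists_cylinder {g : (ℕ → ℕ) → Set ℕ}
    (h : ∀ p ∈ domFO g, ∃ m n, ∀ q ∈ cylinder p m ∩ domFO g, n ∈ g q) : FOContinuous g := by
  let solves : Set (ℕ → ℕ) → Set ℕ := fun C => {n | ∀ q ∈ C ∩ domFO g, n ∈ g q}
  -- the shortest solvable cylinder around `p` is the same for all points of that cylinder
  let len : (ℕ → ℕ) → ℕ := fun p => sInf {m | (solves (cylinder p m)).Nonempty}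
  have hlen : ∀ p ∈ domFO g, (solves (cylinder p (len p))).Nonempty := fun p hp =>
    let ⟨m, n, hmn⟩ := h p hp
    Nat.sInf_mem (s := {m | (solves (cylinder p m)).Nonempty}) ⟨m, n, hmn⟩
  refine ⟨fun p => sInf (solves (cylinder p (len p))), fun p hp => ?_, fun p hp =>
    Nat.sInf_mem (hlen p hp) p ⟨self_mem_cylinder p _, hp⟩⟩
  refine tendsto_nhds_of_eventually_eq (mem_nhdsWithin_of_mem_nhds ?_)
  filter_upwards [(hasBasis_nhds_cylinder p).mem_of_mem (i := len p) trivial] with q hq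
  have hcyl : ∀ k ≤ len p, cylinder q k = cylinder p k := fun k hk =>
    mem_cylinder_iff_eq.1 (cylinder_anti p hk hq)
  have hlenq : len p = len q :=
    Nat.sInf_eq_of_forall_le_iff (hlen p hp) fun k hk => by
      rw [mem_ofPred_eq, mem_ofPred_eq, hcyl k hk]
  simp only [← hlenq, hcyl _ le_rfl]

theorem exists_tendsto_frequently_notMem {g : (ℕ → ℕ) → Set ℕ} {p : ℕ → ℕ}
    (hp : ¬ ∃ m n, ∀ q ∈ cylinder p m ∩ domFO g, n ∈ g q) :
    ∃ w : ℕ → ℕ → ℕ, (∀ k, w k ∈ domFO g) ∧ Tendsto w atTop (𝓝 p) ∧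
      ∀ n, ∃ᶠ k in atTop, n ∉ g (w k) := by
  simp only [not_exists, not_forall, exists_prop] at hp
  choose Q hQ hQg using hp
  refine ⟨fun k => Q k (Nat.unpair k).1, fun k => (hQ _ _).2,
    (hasBasis_nhds_cylinder p).tendsto_right_iff.2 fun m _ =>
      (eventually_ge_atTop m).mono fun k hk => cylinder_anti p hk (hQ k _).1,
    fun n => frequently_atTop.2 fun j => ⟨Nat.pair n j, Nat.right_le_pair n j, ?_⟩⟩
  simpa using hQg (Nat.pair n j) n

theorem exists_tendsto_frequently_notMem_of_not_foContinuous {g : (ℕ → ℕ) → Set ℕ}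
    (hg : ¬ FOContinuous g) :
    ∃ p ∈ domFO g, ∃ w : ℕ → ℕ → ℕ, (∀ k, w k ∈ domFO g) ∧ Tendsto w atTop (𝓝 p) ∧
      ∀ n, ∃ᶠ k in atTop, n ∉ g (w k) := by
  obtain ⟨p, hp, hns⟩ : ∃ p ∈ domFO g, ¬ ∃ m n, ∀ q ∈ cylinder p m ∩ domFO g, n ∈ g q := by
    by_contra! h
    exact hg (foContinuous_of_forall_exists_cylinder h)
  exact ⟨p, hp, exists_tendsto_frequently_notMem hns⟩

theorem discOnSeq_of_redFO {f : (ℕ → ℕ) → Set (ℕ → ℕ)} {g : (ℕ → ℕ) → Set ℕ}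
    (hred : RedFO g f) (hg : ¬ FOContinuous g) : DiscOnSeq f := by
  obtain ⟨H, K, hH, hK, hHdom, hKg⟩ := hred
  obtain ⟨p, hp, w, hw, hwp, hbad⟩ := exists_tendsto_frequently_notMem_of_not_foContinuous hg
  have hHw : Tendsto (H ∘ w) atTop (𝓝 (H p)) :=
    (hH p hp).tendsto.comp (tendsto_nhdsWithin_iff.2 ⟨hwp, .of_forall hw⟩)
  refine ⟨H p, H ∘ w, hHw, hHdom p hp, fun k => hHdom _ (hw k), ?_⟩
  rintro ⟨F, hF, hFf⟩
  have hSa : H p ∈ range (H ∘ w) ∪ {H p} := Or.inr rfl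
  have hSw : ∀ k, (H ∘ w) k ∈ range (H ∘ w) ∪ {H p} := fun k => Or.inl ⟨k, rfl⟩
  have hFw : Tendsto (F ∘ H ∘ w) atTop (𝓝 (F (H p))) :=
    (hF _ hSa).tendsto.comp (tendsto_nhdsWithin_iff.2 ⟨hHw, .of_forall hSw⟩)
  have hKw : Tendsto (fun k => K (w k, F (H (w k)))) atTop (𝓝 (K (p, F (H p)))) :=
    (hK _ ⟨hp, hFf _ hSa⟩).tendsto.comp (tendsto_nhdsWithin_iff.2
      ⟨hwp.prodMk_nhds hFw, .of_forall fun k => ⟨hw k, hFf _ (hSw k)⟩⟩)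
  obtain ⟨k, hnot, hk⟩ :=
    ((hbad _).and_eventually (tendsto_pure.1 (nhds_discrete ℕ ▸ hKw))).exists
  exact hnot (hk ▸ hKg _ (hw k) _ (hFf _ (hSw k)))

theorem exists_continuousOn_selector {f : (ℕ → ℕ) → Set (ℕ → ℕ)} {u : ℕ → ℕ → ℕ} {a q : ℕ → ℕ}
    (hu : Tendsto u atTop (𝓝 a)) (hdom : ∀ k, u k ∈ domP f) (hq : q ∈ f a)
    (hfat : ∀ m, ∀ᶠ k in atTop, (f (u k) ∩ cylinder q m).Nonempty) :
    ∃ F : (ℕ → ℕ) → (ℕ → ℕ), ContinuousOn F (range u ∪ {a}) ∧ ∀ x ∈ range u ∪ {a}, F x ∈ f x := by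
  classical
  -- `F x` agrees with `q` as far as `f x` allows, looking no further than where `x` leaves `a`
  let κ : (ℕ → ℕ) → ℕ := fun x =>
    Nat.findGreatest (fun m => (f x ∩ cylinder q m).Nonempty) (firstDiff x a)
  let F : (ℕ → ℕ) → (ℕ → ℕ) := fun x =>
    if x = a then q else Classical.epsilon (· ∈ f x ∩ cylinder q (κ x))
  have hFa : F a = q := if_pos rfl
  have hFu : ∀ k, u k ≠ a → F (u k) ∈ f (u k) ∩ cylinder q (κ (u k)) := fun k hk => by
    have hne : (f (u k) ∩ cylinder q (κ (u k))).Nonempty :=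
      Nat.findGreatest_spec (P := fun m => (f (u k) ∩ cylinder q m).Nonempty) (Nat.zero_le _)
        (by rw [cylinder_zero, inter_univ]; exact nonempty_iff_ne_empty.2 (hdom k))
    simpa only [F, if_neg hk] using Classical.epsilon_spec hne
  refine ⟨F, continuousOn_range_union_singleton_of_tendsto hu ?_, ?_⟩
  · rw [hFa]
    refine (hasBasis_nhds_cylinder q).tendsto_right_iff.2 fun m _ => ?_
    filter_upwards [hfat m, (hasBasis_nhds_cylinder a).tendsto_right_iff.1 hu m trivial]
      with k hk hka
    by_cases hka' : u k = a
    · simp [hka', hFa]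
    · exact cylinder_anti q (Nat.le_findGreatest
        ((mem_cylinder_iff_le_firstDiff hka' m).1 hka) hk) (hFu k hka').2
  · rintro x (⟨k, rfl⟩ | rfl)
    · by_cases hk : u k = a
      · rw [hk, hFa]; exact hq
      · exact (hFu k hk).1
    · rw [hFa]; exact hq

def codedCylinder (v : ℕ) : Set (ℕ → ℕ) := {y | ∃ m, encode (res y m) = v}

theorem codedCylinder_encode_res (q : ℕ → ℕ) (m : ℕ) :
    codedCylinder (encode (res q m)) = cylinder q m := by
  ext y
  rw [cylinder_eq_res]
  refine ⟨fun ⟨m', h⟩ => ?_, fun h => ⟨m, congrArg encode h⟩⟩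
  have h := encode_injective h
  obtain rfl : m' = m := by simpa using congrArg List.length h
  exact h

section ThinCylinders

variable (f : (ℕ → ℕ) → Set (ℕ → ℕ)) (u : ℕ → ℕ → ℕ)

def IsThin (v : ℕ) : Prop := ∃ᶠ k in atTop, Disjoint (f (u k)) (codedCylinder v)

open scoped Classical in
noncomputable def escapeIndex (j v : ℕ) : ℕ :=
  if h : ∃ k, j ≤ k ∧ Disjoint (f (u k)) (codedCylinder v) then h.choose else j

noncomputable def thinLength (q : ℕ → ℕ) : ℕ := sInf {m | IsThin f u (encode (res q m))}

noncomputable def thinCode (q : ℕ → ℕ) : ℕ := encode (res q (thinLength f u q))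

variable {f u}

theorem le_escapeIndex (j v : ℕ) : j ≤ escapeIndex f u j v := by
  unfold escapeIndex
  split_ifs with h
  exacts [h.choose_spec.1, le_rfl]

theorem disjoint_escapeIndex {v : ℕ} (hv : IsThin f u v) (j : ℕ) :
    Disjoint (f (u (escapeIndex f u j v))) (codedCylinder v) := by
  have h : ∃ k, j ≤ k ∧ Disjoint (f (u k)) (codedCylinder v) := frequently_atTop.1 hv j
  rw [escapeIndex, dif_pos h]
  exact h.choose_spec.2

theorem thinLength_le {q : ℕ → ℕ} {m : ℕ} (hm : IsThin f u (encode (res q m))) :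
    thinLength f u q ≤ m :=
  Nat.sInf_le hm

theorem isThin_thinCode {q : ℕ → ℕ} {m : ℕ} (hm : IsThin f u (encode (res q m))) :
    IsThin f u (thinCode f u q) :=
  Nat.sInf_mem (s := {m | IsThin f u (encode (res q m))}) ⟨m, hm⟩

theorem mem_codedCylinder_thinCode (q : ℕ → ℕ) : q ∈ codedCylinder (thinCode f u q) :=
  ⟨_, rfl⟩

theorem thinCode_eq_of_mem_cylinder {q q' : ℕ → ℕ} {m : ℕ} (hm : IsThin f u (encode (res q m)))
    (hq' : q' ∈ cylinder q m) : thinCode f u q' = thinCode f u q := by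
  have hlen : thinLength f u q = thinLength f u q' :=
    Nat.sInf_eq_of_forall_le_iff hm fun k hk => by
      rw [mem_ofPred_eq, mem_ofPred_eq, res_eq_of_mem_cylinder hq' hk]
  rw [thinCode, thinCode, ← hlen, res_eq_of_mem_cylinder hq' (thinLength_le hm)]

theorem exists_isThin_of_not_exists_selector {a q : ℕ → ℕ} (hu : Tendsto u atTop (𝓝 a))
    (hdom : ∀ k, u k ∈ domP f)
    (hdisc : ¬ ∃ F : (ℕ → ℕ) → (ℕ → ℕ),
      ContinuousOn F (range u ∪ {a}) ∧ ∀ x ∈ range u ∪ {a}, F x ∈ f x)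
    (hq : q ∈ f a) : ∃ m, IsThin f u (encode (res q m)) := by
  by_contra! h
  refine hdisc (exists_continuousOn_selector hu hdom hq fun m => ?_)
  filter_upwards [not_frequently.1 (h m)] with k hk
  rwa [not_disjoint_iff_nonempty_inter, codedCylinder_encode_res] at hk

end ThinCylinders

open scoped Classical in
/-- The first nonzero entry of an `ACC_ℕ` instance: its position and the number it enumerates. -/
noncomputable def accEnum (p : ℕ → ℕ) : Option (ℕ × ℕ) :=
  if h : ∃ i, p i ≠ 0 then some (Nat.find h, p (Nat.find h) - 1) else none

theorem accEnum_eq_none {p : ℕ → ℕ} : accEnum p = none ↔ ∀ i, p i = 0 := by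
  unfold accEnum
  split_ifs with h
  · simpa using h
  · simpa using h

theorem accEnum_eq_some {p : ℕ → ℕ} {j v : ℕ} :
    accEnum p = some (j, v) ↔ p j = v + 1 ∧ ∀ i < j, p i = 0 := by
  unfold accEnum
  split_ifs with h
  · have hj := Nat.find_spec h
    simp only [Option.some.injEq, Prod.mk.injEq]
    constructor
    · rintro ⟨rfl, rfl⟩
      exact ⟨by omega, fun i hi => by simpa using Nat.find_min h hi⟩
    · rintro ⟨hpj, hlt⟩
      obtain rfl : Nat.find h = j :=
        (Nat.find_eq_iff h).2 ⟨by omega, fun i hi => by simpa using hlt i hi⟩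
      omega
  · simp only [not_exists, not_not] at h
    simp [h]

theorem eventually_accEnum_eq {p : ℕ → ℕ} {j v : ℕ} (h : accEnum p = some (j, v)) :
    ∀ᶠ p' in 𝓝 p, accEnum p' = some (j, v) := by
  filter_upwards [(hasBasis_nhds_cylinder p).mem_of_mem (i := j + 1) trivial] with p' hp'
  rw [accEnum_eq_some] at h ⊢
  exact ⟨(hp' j (by omega)).trans h.1, fun i hi => (hp' i (by omega)).trans (h.2 i hi)⟩

theorem eventually_le_of_accEnum_eq_none {p : ℕ → ℕ} (h : accEnum p = none) (m : ℕ) :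
    ∀ᶠ p' in 𝓝 p, ∀ j v, accEnum p' = some (j, v) → m ≤ j := by
  filter_upwards [(hasBasis_nhds_cylinder p).mem_of_mem (i := m) trivial] with p' hp' j v hj
  by_contra! hjm
  have := (accEnum_eq_some.1 hj).1
  rw [hp' j hjm, accEnum_eq_none.1 h] at this
  omega

theorem mem_ACCN_of_ne {p : ℕ → ℕ} {n : ℕ} (hp : p ∈ domFO ACCN)
    (hn : ∀ j v, accEnum p = some (j, v) → n ≠ v) : n ∈ ACCN p := by
  obtain ⟨-, hsingle, -⟩ := nonempty_iff_ne_empty.2 hp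
  refine ⟨hsingle, fun k hk => ?_⟩
  rcases hE : accEnum p with _ | ⟨j, v⟩
  · simp [accEnum_eq_none.1 hE] at hk
  · have hj := (accEnum_eq_some.1 hE).1
    have := hsingle k j (by omega) (by omega)
    exact hn j v hE (by omega)

section Reduction

variable (f : (ℕ → ℕ) → Set (ℕ → ℕ)) (u : ℕ → ℕ → ℕ) (a : ℕ → ℕ)

noncomputable def accForward (p : ℕ → ℕ) : ℕ → ℕ :=
  match accEnum p with
  | none => a
  | some (j, v) => u (escapeIndex f u j v)

open scoped Classical in
noncomputable def accBackward (pq : (ℕ → ℕ) × (ℕ → ℕ)) : ℕ :=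
  match accEnum pq.1 with
  | none => thinCode f u pq.2
  | some (j, v) =>
    if (∃ m ≤ j, IsThin f u (encode (res pq.2 m))) ∧ thinCode f u pq.2 ≠ v then thinCode f u pq.2
    else v + 1

variable {f u a}

theorem accForward_mem_domP (ha : a ∈ domP f) (hdom : ∀ k, u k ∈ domP f) (p : ℕ → ℕ) :
    accForward f u a p ∈ domP f := by
  unfold accForward
  split
  exacts [ha, hdom _]

theorem accBackward_ne {p : ℕ → ℕ} {j v : ℕ} (h : accEnum p = some (j, v)) (q : ℕ → ℕ) :
    accBackward f u (p, q) ≠ v := by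
  simp only [accBackward, h]
  split_ifs with hc
  exacts [hc.2, by omega]

theorem continuous_accForward (hu : Tendsto u atTop (𝓝 a)) : Continuous (accForward f u a) := by
  refine continuous_iff_continuousAt.2 fun p => ?_
  rcases h : accEnum p with _ | ⟨j, v⟩
  · -- an instance that stays zero for a long time is sent far along `u`
    rw [ContinuousAt, show accForward f u a p = a by simp only [accForward, h]]
    intro s hs
    obtain ⟨N, hN⟩ := eventually_atTop.1 (hu hs)
    rw [mem_map]
    filter_upwards [eventually_le_of_accEnum_eq_none h N] with p' hp'
    rcases h' : accEnum p' with _ | ⟨j', v'⟩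
    · simpa only [mem_preimage, accForward, h'] using mem_of_mem_nhds hs
    · simpa only [mem_preimage, accForward, h'] using
        hN _ ((hp' _ _ h').trans (le_escapeIndex j' v'))
  · refine (continuousAt_const (y := accForward f u a p)).congr ?_
    filter_upwards [eventually_accEnum_eq h] with p' hp'
    simp only [accForward, h, hp']

theorem eventually_accBackward_eq_of_accEnum_eq_some {p q : ℕ → ℕ} {j v : ℕ}
    (h : accEnum p = some (j, v)) :
    ∀ᶠ pq' in 𝓝 (p, q), accBackward f u pq' = accBackward f u (p, q) := by
  filter_upwards [(eventually_accEnum_eq h).prod_nhds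
    ((hasBasis_nhds_cylinder q).mem_of_mem (i := j) trivial)] with ⟨p', q'⟩ ⟨hp', hq'⟩
  have hcond : (∃ m ≤ j, IsThin f u (encode (res q' m))) ↔
      ∃ m ≤ j, IsThin f u (encode (res q m)) :=
    exists_congr fun m => and_congr_right fun hm => by rw [res_eq_of_mem_cylinder hq' hm]
  dsimp only at hp' hq'
  have hcode : (∃ m ≤ j, IsThin f u (encode (res q m))) → thinCode f u q' = thinCode f u q :=
    fun ⟨m, hmj, hm⟩ => thinCode_eq_of_mem_cylinder hm (cylinder_anti q hmj hq')
  simp only [accBackward, h, hp']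
  split_ifs with h₁ h₂ h₂
  · exact hcode h₂.1
  · exact absurd ⟨hcond.1 h₁.1, hcode (hcond.1 h₁.1) ▸ h₁.2⟩ h₂
  · exact absurd ⟨hcond.2 h₂.1, by rw [hcode h₂.1]; exact h₂.2⟩ h₁
  · rfl

theorem eventually_accBackward_eq_of_accEnum_eq_none {p q : ℕ → ℕ} {m : ℕ}
    (hm : IsThin f u (encode (res q m))) (h : accEnum p = none) :
    ∀ᶠ pq' in 𝓝[{pq | pq.2 ∈ f (accForward f u a pq.1)}] (p, q),
      accBackward f u pq' = thinCode f u q := by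
  filter_upwards [mem_nhdsWithin_of_mem_nhds ((eventually_le_of_accEnum_eq_none h m).prod_nhds
    ((hasBasis_nhds_cylinder q).mem_of_mem (i := m) trivial)), self_mem_nhdsWithin]
    with ⟨p', q'⟩ ⟨hp', hq'⟩ hq'f
  have hcode := thinCode_eq_of_mem_cylinder hm hq'
  rcases h' : accEnum p' with _ | ⟨j, v⟩
  · simp only [accBackward, h', hcode]
  · simp only [accBackward, h', hcode]
    refine if_pos ⟨⟨m, hp' j v h', by rwa [res_eq_of_mem_cylinder hq' le_rfl]⟩, ?_⟩
    -- had the instance enumerated `thinCode q`, `q'` would solve an input avoiding that cylinder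
    rintro rfl
    replace hq'f : q' ∈ f (u (escapeIndex f u j (thinCode f u q))) := by
      simpa only [accForward, h', hcode] using hq'f
    exact disjoint_left.1 (disjoint_escapeIndex (isThin_thinCode hm) j) hq'f
      (hcode ▸ mem_codedCylinder_thinCode q')

theorem continuousOn_accBackward (hu : Tendsto u atTop (𝓝 a)) (hdom : ∀ k, u k ∈ domP f)
    (hdisc : ¬ ∃ F : (ℕ → ℕ) → (ℕ → ℕ),
      ContinuousOn F (range u ∪ {a}) ∧ ∀ x ∈ range u ∪ {a}, F x ∈ f x) :
    ContinuousOn (accBackward f u)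
      {pq | pq.1 ∈ domFO ACCN ∧ pq.2 ∈ f (accForward f u a pq.1)} := by
  rintro ⟨p, q⟩ ⟨-, hq⟩
  refine tendsto_nhds_of_eventually_eq ?_
  rcases h : accEnum p with _ | ⟨j, v⟩
  · have hqa : q ∈ f a := by simpa only [accForward, h] using hq
    obtain ⟨m, hm⟩ := exists_isThin_of_not_exists_selector hu hdom hdisc hqa
    rw [show accBackward f u (p, q) = thinCode f u q by simp only [accBackward, h]]
    exact (eventually_accBackward_eq_of_accEnum_eq_none hm h).filter_mono
      (nhdsWithin_mono _ fun _ hpq => hpq.2)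
  · exact eventually_nhdsWithin_of_eventually_nhds
      (eventually_accBackward_eq_of_accEnum_eq_some h)

end Reduction

theorem redFO_ACCN_of_discOnSeq {f : (ℕ → ℕ) → Set (ℕ → ℕ)} (h : DiscOnSeq f) :
    RedFO ACCN f := by
  obtain ⟨a, u, hu, ha, hdom, hdisc⟩ := h
  exact ⟨accForward f u a, accBackward f u, (continuous_accForward hu).continuousOn,
    continuousOn_accBackward hu hdom hdisc, fun p _ => accForward_mem_domP ha hdom p,
    fun p hp q _ => mem_ACCN_of_ne hp fun _ _ h => accBackward_ne h q⟩

theorem not_foContinuous_ACCN : ¬ FOContinuous ACCN := by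
  rintro ⟨F, hF, hFs⟩
  have hmem : ∀ m n, n + 1 ∈ ACCN (Pi.single m (n + 1)) := fun m n =>
    ⟨fun i j hi hj => by simp_all [Pi.single_apply], fun k => by
      simp only [Pi.single_apply]; split_ifs <;> omega⟩
  have h0 : (0 : ℕ → ℕ) ∈ domFO ACCN :=
    nonempty_iff_ne_empty.1 ⟨0, fun i j hi => absurd rfl hi, fun _ => by simp⟩
  let w : ℕ → ℕ → ℕ := fun m => Pi.single m (F 0 + 1)
  have hw : ∀ m, w m ∈ domFO ACCN := fun m => nonempty_iff_ne_empty.1 ⟨_, hmem m _⟩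
  have hw0 : Tendsto w atTop (𝓝 0) := tendsto_pi_nhds.2 fun i =>
    tendsto_nhds_of_eventually_eq ((eventually_gt_atTop i).mono fun m hm =>
      Pi.single_eq_of_ne hm.ne _)
  have hFw := (hF 0 h0).tendsto.comp (tendsto_nhdsWithin_iff.2 ⟨hw0, .of_forall hw⟩)
  obtain ⟨m, hm⟩ := (tendsto_pure.1 (nhds_discrete ℕ ▸ hFw)).exists
  have hm' : F (w m) = F 0 := hm
  exact (hFs _ (hw m)).2 m (by rw [hm']; exact Pi.single_eq_same m _)

theorem acc_least_discontinuous_first_order (f : (ℕ → ℕ) → Set (ℕ → ℕ)) :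
    ((∃ g : (ℕ → ℕ) → Set ℕ, RedFO g f ∧ ¬ FOContinuous g) ↔ DiscOnSeq f) ∧
    (DiscOnSeq f ↔ RedFO ACCN f) := by
  have h12 : (∃ g, RedFO g f ∧ ¬ FOContinuous g) → DiscOnSeq f :=
    fun ⟨_, hred, hg⟩ => discOnSeq_of_redFO hred hg
  have h31 : RedFO ACCN f → ∃ g, RedFO g f ∧ ¬ FOContinuous g :=
    fun h => ⟨ACCN, h, not_foContinuous_ACCN⟩
  exact ⟨⟨h12, fun h => h31 (redFO_ACCN_of_discOnSeq h)⟩,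
    ⟨redFO_ACCN_of_discOnSeq, fun h => h12 (h31 h)⟩⟩
end

section
/- ACC_ℕ and SEQACC_ℕ are strongly continuously Weihrauch equivalent: ACC_ℕ ≤_sW* SEQACC_ℕ and SEQACC_ℕ ≤_sW* ACC_ℕ. -/
/-- The problem `SEQACC_ℕ`: inputs are 0-1-sequences; if the first `1` occurs at
position `s = Nat.pair n m`, any answer different from `n` is valid. -/
def SEQACCN (p : ℕ → ℕ) : Set ℕ :=
  {k | (∀ i, p i ≤ 1) ∧
    ∀ s, p s = 1 → (∀ t < s, p t = 0) → k ≠ (Nat.unpair s).1}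

/-- Strong continuous Weihrauch reducibility between first-order problems. -/
def sRedFO (f g : (ℕ → ℕ) → Set ℕ) : Prop :=
  ∃ (H : (ℕ → ℕ) → (ℕ → ℕ)) (K : ℕ → ℕ),
    ContinuousOn H (domFO f) ∧
    ∀ p ∈ domFO f, H p ∈ domFO g ∧ ∀ n ∈ g (H p), K n ∈ f p

open PiNat

theorem PiNat.continuous_of_forall_exists_cylinder {E : ℕ → Type*} [∀ n, TopologicalSpace (E n)]
    [∀ n, DiscreteTopology (E n)] {X : Type*} [TopologicalSpace X] {F : (∀ n, E n) → X}
    (hF : ∀ x, ∃ n, ∀ y ∈ cylinder x n, F y = F x) : Continuous F := by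
  refine ((IsLocallyConstant.iff_eventually_eq F).2 fun x => ?_).continuous
  obtain ⟨n, hn⟩ := hF x
  exact Filter.mem_of_superset ((isOpen_cylinder (E := E) x n).mem_nhds (self_mem_cylinder x n)) hn

theorem sRedFO_of_forall_eq {f g : (ℕ → ℕ) → Set ℕ} (H : (ℕ → ℕ) → ℕ → ℕ)
    (hH : ContinuousOn H (domFO f)) (hfg : ∀ p ∈ domFO f, g (H p) = f p) : sRedFO f g :=
  ⟨H, id, hH, fun p hp => ⟨by rwa [domFO, Set.mem_ofPred_eq, hfg p hp], fun n hn => by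
    rwa [hfg p hp] at hn⟩⟩

theorem exists_first_one {q : ℕ → ℕ} (hq : ∀ i, q i ≤ 1) {s : ℕ} (hs : q s = 1) :
    ∃ s₀, q s₀ = 1 ∧ ∀ t < s₀, q t = 0 := by
  classical
  have hex : ∃ s, q s = 1 := ⟨s, hs⟩
  refine ⟨Nat.find hex, Nat.find_spec hex, fun t ht => ?_⟩
  have := Nat.find_min hex ht
  have := hq t
  omega

theorem eq_of_first_one {p : ℕ → ℕ} {s t : ℕ} (hs : p s = 1) (hs' : ∀ j < s, p j = 0)
    (ht : p t = 1) (ht' : ∀ j < t, p j = 0) : s = t := by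
  by_contra hne
  rcases Nat.lt_or_gt_of_ne hne with h | h
  · simp [ht' s h] at hs
  · simp [hs' t h] at ht

def accnToSeqaccn (p : ℕ → ℕ) (s : ℕ) : ℕ :=
  if p s.unpair.2 = s.unpair.1 + 1 then 1 else 0

theorem continuous_accnToSeqaccn : Continuous accnToSeqaccn :=
  continuous_pi fun s =>
    (continuous_of_discreteTopology (f := fun v : ℕ => if v = s.unpair.1 + 1 then 1 else 0)).comp
      (continuous_apply s.unpair.2)

theorem seqaccn_accnToSeqaccn {p : ℕ → ℕ} (hp : ∀ i j, p i ≠ 0 → p j ≠ 0 → p i = p j) :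
    SEQACCN (accnToSeqaccn p) = ACCN p := by
  have hle : ∀ s, accnToSeqaccn p s ≤ 1 := fun s => by unfold accnToSeqaccn; split <;> omega
  have hone : ∀ s, accnToSeqaccn p s = 1 ↔ p s.unpair.2 = s.unpair.1 + 1 := fun s => by
    unfold accnToSeqaccn; split <;> simp_all
  ext k
  simp only [SEQACCN, ACCN, Set.mem_ofPred_eq, hle, implies_true, true_and, and_iff_right hp]
  constructor
  · intro hk m hm
    have hpair : accnToSeqaccn p (Nat.pair k m) = 1 := by simpa [hone] using hm
    obtain ⟨s, hs, hmin⟩ := exists_first_one hle hpair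
    have hps := (hone s).1 hs
    have hsame := hp s.unpair.2 m (by omega) (by omega)
    exact hk s hs hmin (by omega)
  · intro hk s hs _ hks
    exact hk s.unpair.2 (hks ▸ (hone s).1 hs)

theorem accn_sRedFO_seqaccn : sRedFO ACCN SEQACCN :=
  sRedFO_of_forall_eq accnToSeqaccn continuous_accnToSeqaccn.continuousOn fun p hp => by
    obtain ⟨n, hD, -⟩ := Set.nonempty_iff_ne_empty.2 hp
    exact seqaccn_accnToSeqaccn hD

def seqaccnToAccn (p : ℕ → ℕ) (t : ℕ) : ℕ :=
  if p t = 1 ∧ ∀ j < t, p j = 0 then t.unpair.1 + 1 else 0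

theorem continuous_seqaccnToAccn : Continuous seqaccnToAccn := by
  refine continuous_pi fun t => continuous_of_forall_exists_cylinder fun p =>
    ⟨t + 1, fun q hq => ?_⟩
  have hagree : ∀ j ≤ t, q j = p j := fun j hj => mem_cylinder_iff.1 hq j (by omega)
  have hprefix : (∀ j < t, q j = 0) ↔ ∀ j < t, p j = 0 :=
    forall₂_congr fun j hj => by rw [hagree j hj.le]
  simp only [seqaccnToAccn, hagree t le_rfl, hprefix]

theorem seqaccnToAccn_eq_succ_iff {p : ℕ → ℕ} {t n : ℕ} :
    seqaccnToAccn p t = n + 1 ↔ (p t = 1 ∧ ∀ j < t, p j = 0) ∧ t.unpair.1 = n := by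
  unfold seqaccnToAccn
  split <;> simp_all

theorem accn_seqaccnToAccn {p : ℕ → ℕ} (hp : ∀ i, p i ≤ 1) :
    ACCN (seqaccnToAccn p) = SEQACCN p := by
  have hD : ∀ i j, seqaccnToAccn p i ≠ 0 → seqaccnToAccn p j ≠ 0 →
      seqaccnToAccn p i = seqaccnToAccn p j := by
    intro i j hi hj
    obtain ⟨⟨hpi, hmi⟩, -⟩ := seqaccnToAccn_eq_succ_iff.1 (Nat.sub_one_add_one hi).symm
    obtain ⟨⟨hpj, hmj⟩, -⟩ := seqaccnToAccn_eq_succ_iff.1 (Nat.sub_one_add_one hj).symm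
    rw [eq_of_first_one hpi hmi hpj hmj]
  ext n
  simp only [ACCN, SEQACCN, Set.mem_ofPred_eq, and_iff_right hD, and_iff_right hp, ne_eq,
    seqaccnToAccn_eq_succ_iff, not_and]
  exact ⟨fun h s hs hmin hn => h s ⟨hs, hmin⟩ hn.symm, fun h t ht hn => h t ht.1 ht.2 hn.symm⟩

theorem seqaccn_sRedFO_accn : sRedFO SEQACCN ACCN :=
  sRedFO_of_forall_eq seqaccnToAccn continuous_seqaccnToAccn.continuousOn fun p hp => by
    obtain ⟨n, hp01, -⟩ := Set.nonempty_iff_ne_empty.2 hp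
    exact accn_seqaccnToAccn hp01

theorem accn_equiv_seqaccn : sRedFO ACCN SEQACCN ∧ sRedFO SEQACCN ACCN :=
  ⟨accn_sRedFO_seqaccn, seqaccn_sRedFO_accn⟩
end

section
/- Let f : (ℕ→ℕ) → Set (ℕ→ℕ) be a problem with ACC_ℕ ≤_W* f. Then there exist a point a and a sequence (a_n) in Baire space with a_n → a, such that a ∈ dom f, a_n ∈ dom f for every n, and the restriction of f to S = {a_n | n ∈ ℕ} ∪ {a} is discontinuous, i.e. there is no F : (ℕ→ℕ) → (ℕ→ℕ) continuous on S with F x ∈ f x for all x ∈ S. -/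
/-!
`ACC_ℕ` is discontinuous at the all-zero instance: the instances `Pi.single k (m + 1)` converge
to `0` and forbid the answer `m`. Enumerating them with every `m` forbidden infinitely often,
no choice of solutions along the sequence can converge in discrete `ℕ`. A reduction `(H, K)`
together with a solution `F` of `f` continuous on the image sequence under `H` and its limit
would produce exactly such a convergent choice `K (p, F (H p))`.
-/

open Filter Topology Set

lemma single_mem_domFO_ACCN (k v : ℕ) : (Pi.single k v : ℕ → ℕ) ∈ domFO ACCN := by
  refine Set.nonempty_iff_ne_empty.1 ⟨v, fun i j hi hj => ?_, fun i => ?_⟩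
  · rw [Pi.single_apply] at hi hj ⊢
    split_ifs at hi hj ⊢ <;> simp_all
  · rw [Pi.single_apply]
    split_ifs <;> omega

lemma tendsto_pi_single_atTop_zero {M : Type*} [Zero M] [TopologicalSpace M] (v : ℕ → M) :
    Tendsto (fun k => (Pi.single k (v k) : ℕ → M)) atTop (𝓝 0) := by
  refine tendsto_pi_nhds.2 fun i => tendsto_const_nhds.congr' ?_
  filter_upwards [eventually_gt_atTop i] with k hk
  simp [hk.ne]

lemma ContinuousWithinAt.tendsto_comp_of_mem {X Y ι : Type*} [TopologicalSpace X]
    [TopologicalSpace Y] {F : X → Y} {s : Set X} {a : X} {l : Filter ι} {u : ι → X}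
    (hF : ContinuousWithinAt F s a) (hu : Tendsto u l (𝓝 a)) (hus : ∀ i, u i ∈ s) :
    Tendsto (F ∘ u) l (𝓝 (F a)) :=
  hF.tendsto.comp (tendsto_nhdsWithin_iff.2 ⟨hu, .of_forall hus⟩)

/-- The instance `accnSeq (Nat.pair N m)` forbids the answer `m`. -/
def accnSeq (k : ℕ) : ℕ → ℕ := Pi.single k (k.unpair.2 + 1)

lemma tendsto_accnSeq : Tendsto accnSeq atTop (𝓝 0) :=
  tendsto_pi_single_atTop_zero _

lemma not_tendsto_of_mem_ACCN_accnSeq {s : ℕ → ℕ} (hs : ∀ k, s k ∈ ACCN (accnSeq k)) (m : ℕ) :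
    ¬ Tendsto s atTop (𝓝 m) := by
  rw [nhds_discrete, tendsto_pure]
  intro hm
  obtain ⟨N, hN⟩ := hm.exists_forall_of_atTop
  have hk := (hs (Nat.pair N m)).2 (Nat.pair N m)
  rw [hN _ (Nat.left_le_pair N m)] at hk
  simp [accnSeq] at hk

theorem discOnSeq_of_accn_red (f : (ℕ → ℕ) → Set (ℕ → ℕ)) (hred : RedFO ACCN f) :
    ∃ (a : ℕ → ℕ) (aseq : ℕ → (ℕ → ℕ)),
      Filter.Tendsto aseq Filter.atTop (nhds a) ∧
      a ∈ domP f ∧ (∀ n, aseq n ∈ domP f) ∧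
      ¬ ∃ F : (ℕ → ℕ) → (ℕ → ℕ),
          ContinuousOn F (Set.range aseq ∪ {a}) ∧
          ∀ x ∈ Set.range aseq ∪ {a}, F x ∈ f x := by
  obtain ⟨H, K, hH, hK, hdom, hsol⟩ := hred
  have h0 : (0 : ℕ → ℕ) ∈ domFO ACCN := by simpa using single_mem_domFO_ACCN 0 0
  have hseq (k : ℕ) : accnSeq k ∈ domFO ACCN := single_mem_domFO_ACCN _ _
  have hHseq : Tendsto (H ∘ accnSeq) atTop (𝓝 (H 0)) :=
    (hH 0 h0).tendsto_comp_of_mem tendsto_accnSeq hseq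
  refine ⟨H 0, H ∘ accnSeq, hHseq, hdom 0 h0, fun k => hdom _ (hseq k), ?_⟩
  rintro ⟨F, hFc, hFs⟩
  have hFseq (k : ℕ) : F (H (accnSeq k)) ∈ f (H (accnSeq k)) := hFs _ (.inl ⟨k, rfl⟩)
  have hF0 : F (H 0) ∈ f (H 0) := hFs _ (.inr rfl)
  have hFHseq : Tendsto (F ∘ H ∘ accnSeq) atTop (𝓝 (F (H 0))) :=
    (hFc _ (.inr rfl)).tendsto_comp_of_mem hHseq fun k => .inl ⟨k, rfl⟩
  refine not_tendsto_of_mem_ACCN_accnSeq (fun k => hsol _ (hseq k) _ (hFseq k))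
    (K (0, F (H 0))) ?_
  exact (hK _ ⟨h0, hF0⟩).tendsto_comp_of_mem (tendsto_accnSeq.prodMk_nhds hFHseq)
    fun k => ⟨hseq k, hFseq k⟩
end

section
/- Let f : (ℕ→ℕ) → Set (ℕ→ℕ) be a problem, and suppose there exist a point a and a sequence (a_n) in Baire space with a_n → a, such that a ∈ dom f, a_n ∈ dom f for every n, and the restriction of f to S = {a_n | n ∈ ℕ} ∪ {a} is discontinuous (there is no F : (ℕ→ℕ) → (ℕ→ℕ) continuous on S with F x ∈ f x for all x ∈ S). Then ACC_ℕ ≤_W* f. -/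
open Filter Topology Set PiNat

namespace PiNat

variable {E : ℕ → Type*}

theorem firstDiff_eq_of_mem_cylinder {x y z : ∀ n, E n} (hxy : x ≠ y)
    (hz : z ∈ cylinder x (firstDiff x y + 1)) : firstDiff z y = firstDiff x y := by
  have hzt : z (firstDiff x y) ≠ y (firstDiff x y) :=
    hz _ (Nat.lt_succ_self _) ▸ apply_firstDiff_ne hxy
  have hzy : z ≠ y := fun h => hzt (h ▸ rfl)
  refine le_antisymm (not_lt.1 fun h => hzt (apply_eq_of_lt_firstDiff h)) ?_
  refine (mem_cylinder_iff_le_firstDiff hzy _).1 fun i hi => ?_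
  rw [hz i (Nat.lt_succ_of_lt hi)]
  exact apply_eq_of_lt_firstDiff hi

variable [∀ n, TopologicalSpace (E n)] [∀ n, DiscreteTopology (E n)]

theorem hasBasis_nhds_cylinder_s3 (x : ∀ n, E n) : (𝓝 x).HasBasis (fun _ => True) (cylinder x) := by
  refine ⟨fun s => ⟨fun hs => ?_, fun ⟨n, _, hn⟩ =>
    mem_of_superset ((isOpen_cylinder E x n).mem_nhds (self_mem_cylinder x n)) hn⟩⟩
  obtain ⟨-, ⟨y, n, rfl⟩, hxy, hs⟩ := (isTopologicalBasis_cylinders E).mem_nhds_iff.1 hs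
  exact ⟨n, trivial, (mem_cylinder_iff_eq.1 hxy).symm ▸ hs⟩

theorem tendsto_nhds_iff_cylinder {α : Type*} {l : Filter α} {F : α → ∀ n, E n} {y : ∀ n, E n} :
    Tendsto F l (𝓝 y) ↔ ∀ n, ∀ᶠ z in l, F z ∈ cylinder y n := by
  simp [(hasBasis_nhds_cylinder_s3 y).tendsto_right_iff]

end PiNat

theorem Nat.sInf_eq_of_forall_le_iff_s3 {P Q : ℕ → Prop} {n : ℕ} (hn : Q n)
    (h : ∀ m ≤ n, P m ↔ Q m) : sInf {m | P m} = sInf {m | Q m} := by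
  have hQn : sInf {m | Q m} ≤ n := Nat.sInf_le hn
  have hP : P (sInf {m | Q m}) := (h _ hQn).2 (Nat.sInf_mem ⟨n, hn⟩)
  have hPQ : sInf {m | P m} ≤ sInf {m | Q m} := Nat.sInf_le hP
  exact hPQ.antisymm (Nat.sInf_le ((h _ (hPQ.trans hQn)).1 (Nat.sInf_mem ⟨_, hP⟩)))

theorem Filter.Tendsto.nhdsWithin_range_union_singleton_eq_pure {X : Type*} [TopologicalSpace X]
    [T2Space X] {u : ℕ → X} {a x : X} (hu : Tendsto u atTop (𝓝 a)) (hx : x ∈ range u)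
    (hxa : x ≠ a) : 𝓝[range u ∪ {a}] x = pure x := by
  obtain ⟨U, V, hU, hV, hUV⟩ := t2_separation_nhds hxa
  have hfin : {n | u n ∉ V}.Finite := by
    rw [← Nat.cofinite_eq_atTop] at hu
    exact eventually_cofinite.1 (hu.eventually_mem hV)
  have hsub : (range u ∪ {a}) ∩ U ⊆ u '' {n | u n ∉ V} := by
    rintro _ ⟨⟨n, rfl⟩ | rfl, hU'⟩
    · exact ⟨n, hUV.notMem_of_mem_left hU', rfl⟩
    · exact absurd (mem_of_mem_nhds hV) (hUV.notMem_of_mem_left hU')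
  rw [nhdsWithin_restrict' _ hU]
  exact isDiscrete_iff_nhdsWithin.1 ((hfin.image u).subset hsub).isDiscrete x
    ⟨Or.inl hx, mem_of_mem_nhds hU⟩

theorem exists_continuousOn_selector_s3 {f : (ℕ → ℕ) → Set (ℕ → ℕ)} {S : Set (ℕ → ℕ)}
    {a q : ℕ → ℕ} (hS : S ⊆ domP f) (hiso : ∀ x ∈ S, x ≠ a → 𝓝[S] x = pure x) (hq : q ∈ f a)
    (h : ∀ m, a ∉ closure {x ∈ S | Disjoint (f x) (cylinder q m)}) :
    ∃ F : (ℕ → ℕ) → (ℕ → ℕ), ContinuousOn F S ∧ ∀ x ∈ S, F x ∈ f x := by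
  classical
  -- away from `a`, follow `q` for as long as `f x` allows, but no longer than `x` follows `a`
  let depth (x : ℕ → ℕ) : ℕ :=
    Nat.findGreatest (fun m => (f x ∩ cylinder q m).Nonempty) (firstDiff x a)
  let F (x : ℕ → ℕ) : ℕ → ℕ :=
    if x = a then q else Classical.epsilon (· ∈ f x ∩ cylinder q (depth x))
  have hF : ∀ x ∈ S, x ≠ a → F x ∈ f x ∩ cylinder q (depth x) := fun x hx hxa => by
    simp only [F, if_neg hxa]
    refine Classical.epsilon_spec
      (Nat.findGreatest_spec (P := fun m => (f x ∩ cylinder q m).Nonempty) (Nat.zero_le _) ?_)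
    rw [cylinder_zero, inter_univ]
    exact nonempty_iff_ne_empty.2 (hS hx)
  refine ⟨F, fun x hx => ?_, fun x hx => ?_⟩
  · by_cases hxa : x = a
    · subst hxa
      refine tendsto_nhds_iff_cylinder.2 fun M => ?_
      have hnear := (not_frequently.1 (mt mem_closure_iff_frequently.2 (h M))).and
        ((isOpen_cylinder _ x M).mem_nhds (self_mem_cylinder x M))
      filter_upwards [nhdsWithin_le_nhds hnear, self_mem_nhdsWithin] with y ⟨hyq, hya⟩ hy
      by_cases hyx : y = x
      · simp [F, hyx]
      · have hdepth : M ≤ depth y := Nat.le_findGreatest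
          ((mem_cylinder_iff_le_firstDiff hyx M).1 hya)
          (not_disjoint_iff_nonempty_inter.1 fun hd => hyq ⟨hy, hd⟩)
        simpa [F, hyx] using cylinder_anti q hdepth (hF y hy hyx).2
    · simp only [ContinuousWithinAt, hiso x hx hxa, tendsto_pure_nhds]
  · by_cases hxa : x = a
    · simpa [F, hxa] using hq
    · exact (hF x hx hxa).1

open Classical in
theorem continuous_ite_firstDiff {a : ℕ → ℕ} {g : ℕ → ℕ → ℕ → ℕ}
    (hg : ∀ t v, g t v ∈ cylinder a t) :
    Continuous fun p : ℕ → ℕ => if p = 0 then a else g (firstDiff p 0) (p (firstDiff p 0)) := by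
  refine continuous_iff_continuousAt.2 fun p₀ => tendsto_nhds_iff_cylinder.2 fun M => ?_
  by_cases hp₀ : p₀ = 0
  · filter_upwards [(isOpen_cylinder _ p₀ M).mem_nhds (self_mem_cylinder p₀ M)] with p hp
    subst hp₀
    by_cases hp0 : p = 0
    · simp [hp0]
    · simpa [hp0] using cylinder_anti a ((mem_cylinder_iff_le_firstDiff hp0 M).1 hp) (hg _ _)
  · filter_upwards [(isOpen_cylinder _ p₀ _).mem_nhds (self_mem_cylinder p₀ (firstDiff p₀ 0 + 1))]
      with p hp
    have hp0 : p ≠ 0 := fun h => apply_firstDiff_ne hp₀ (h ▸ hp _ (Nat.lt_succ_self _)).symm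
    rw [if_neg hp0, if_neg hp₀, firstDiff_eq_of_mem_cylinder hp₀ hp, hp _ (Nat.lt_succ_self _)]
    exact self_mem_cylinder _ _

def prefixSet (σ : List ℕ) : Set (ℕ → ℕ) := {r | res r σ.length = σ}

theorem prefixSet_res (q : ℕ → ℕ) (m : ℕ) : prefixSet (res q m) = cylinder q m := by
  simp [prefixSet, res_length, cylinder_eq_res]

section Reduction

variable (f : (ℕ → ℕ) → Set (ℕ → ℕ)) (S : Set (ℕ → ℕ)) (a : ℕ → ℕ)

def AvoidableNear (U : Set (ℕ → ℕ)) : Prop :=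
  a ∈ closure {x ∈ S | Disjoint (f x) U}

open Classical in
noncomputable def avoidingPoint (U : Set (ℕ → ℕ)) (t : ℕ) : ℕ → ℕ :=
  if h : ∃ x ∈ S ∩ cylinder a t, Disjoint (f x) U then h.choose else a

open Classical in
noncomputable def reductionInput (p : ℕ → ℕ) : ℕ → ℕ :=
  if p = 0 then a else
    avoidingPoint f S a (prefixSet (Denumerable.ofNat (List ℕ) (p (firstDiff p 0) - 1)))
      (firstDiff p 0)

def StopsAt (p q : ℕ → ℕ) (m : ℕ) : Prop :=
  AvoidableNear f S a (cylinder q m) ∨ p ∉ cylinder 0 m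

noncomputable def stage (p q : ℕ → ℕ) : ℕ :=
  sInf {m | StopsAt f S a p q m}

open Classical in
noncomputable def reductionOutput (w : (ℕ → ℕ) × (ℕ → ℕ)) : ℕ :=
  if AvoidableNear f S a (cylinder w.2 (stage f S a w.1 w.2)) then
    Encodable.encode (res w.2 (stage f S a w.1 w.2))
  else (Finset.range (stage f S a w.1 w.2)).sup w.1

variable {f S a}

theorem avoidingPoint_mem_cylinder (U : Set (ℕ → ℕ)) (t : ℕ) :
    avoidingPoint f S a U t ∈ cylinder a t := by
  unfold avoidingPoint
  split_ifs with h
  exacts [h.choose_spec.1.2, self_mem_cylinder a t]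

theorem avoidingPoint_mem_domP (ha : a ∈ domP f) (hS : S ⊆ domP f) (U : Set (ℕ → ℕ)) (t : ℕ) :
    avoidingPoint f S a U t ∈ domP f := by
  unfold avoidingPoint
  split_ifs with h
  exacts [hS h.choose_spec.1.1, ha]

theorem disjoint_avoidingPoint {U : Set (ℕ → ℕ)} (hU : AvoidableNear f S a U) (t : ℕ) :
    Disjoint (f (avoidingPoint f S a U t)) U := by
  have h : ∃ x ∈ S ∩ cylinder a t, Disjoint (f x) U := by
    obtain ⟨x, ⟨hxS, hx⟩, hxa⟩ :=
      (mem_closure_iff_nhds_basis (hasBasis_nhds_cylinder_s3 a)).1 hU t trivial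
    exact ⟨x, ⟨hxS, hxa⟩, hx⟩
  unfold avoidingPoint
  rw [dif_pos h]
  exact h.choose_spec.2

theorem continuous_reductionInput : Continuous (reductionInput f S a) := by
  unfold reductionInput
  exact continuous_ite_firstDiff (g := fun t v =>
    avoidingPoint f S a (prefixSet (Denumerable.ofNat (List ℕ) (v - 1))) t)
    fun _ _ => avoidingPoint_mem_cylinder _ _

theorem stopsAt_of_ne_zero {p : ℕ → ℕ} (hp : p ≠ 0) (q : ℕ → ℕ) :
    StopsAt f S a p q (firstDiff p 0 + 1) :=
  Or.inr fun h => apply_firstDiff_ne hp (h _ (Nat.lt_succ_self _))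

theorem stopsAt_stage {p q : ℕ → ℕ} (h : ∃ m, StopsAt f S a p q m) :
    StopsAt f S a p q (stage f S a p q) :=
  Nat.sInf_mem h

theorem stage_eq_of_mem_cylinder {p₀ q₀ p q : ℕ → ℕ} (h : ∃ m, StopsAt f S a p₀ q₀ m)
    (hp : p ∈ cylinder p₀ (stage f S a p₀ q₀)) (hq : q ∈ cylinder q₀ (stage f S a p₀ q₀)) :
    stage f S a p q = stage f S a p₀ q₀ := by
  refine Nat.sInf_eq_of_forall_le_iff_s3 (stopsAt_stage h) fun m hm => ?_
  have hpm := mem_cylinder_iff_eq.1 (cylinder_anti _ hm hp)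
  have hqm := mem_cylinder_iff_eq.1 (cylinder_anti _ hm hq)
  simp only [StopsAt, mem_cylinder_iff_eq (y := p), mem_cylinder_iff_eq (y := p₀), hpm, hqm]

theorem reductionOutput_eventuallyEq {p₀ q₀ : ℕ → ℕ} (h : ∃ m, StopsAt f S a p₀ q₀ m) :
    reductionOutput f S a =ᶠ[𝓝 (p₀, q₀)] fun _ => reductionOutput f S a (p₀, q₀) := by
  filter_upwards [prod_mem_nhds
    ((isOpen_cylinder _ p₀ _).mem_nhds (self_mem_cylinder p₀ (stage f S a p₀ q₀)))
    ((isOpen_cylinder _ q₀ _).mem_nhds (self_mem_cylinder q₀ (stage f S a p₀ q₀)))]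
    with ⟨p, q⟩ ⟨hp, hq⟩
  have hstage : stage f S a p q = _ := stage_eq_of_mem_cylinder h hp hq
  rw [reductionOutput, reductionOutput, hstage, mem_cylinder_iff_eq.1 hq,
    res_eq_res.2 fun i hi => hq i hi, Finset.sup_congr rfl fun i hi => hp i (Finset.mem_range.1 hi)]

theorem reductionOutput_mem_ACCN {p q : ℕ → ℕ} (hp : p ∈ domFO ACCN)
    (hq : q ∈ f (reductionInput f S a p)) : reductionOutput f S a (p, q) ∈ ACCN p := by
  obtain ⟨-, huniq, -⟩ := nonempty_iff_ne_empty.2 hp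
  refine ⟨huniq, fun k hk => ?_⟩
  have hpk : p k ≠ 0 := by omega
  have hp0 : p ≠ 0 := fun h => hpk (congrFun h k)
  have hpt : p (firstDiff p 0) ≠ 0 := apply_firstDiff_ne hp0
  have hstop := stopsAt_stage (⟨_, stopsAt_of_ne_zero hp0 q⟩ : ∃ m, StopsAt f S a p q m)
  rw [huniq k _ hpk hpt] at hk
  by_cases hav : AvoidableNear f S a (cylinder q (stage f S a p q))
  · -- otherwise `p` would name the prefix of `q` that the instance `reductionInput p` avoids
    simp only [reductionOutput, if_pos hav] at hk
    have hσ : Denumerable.ofNat (List ℕ) (p (firstDiff p 0) - 1) = res q (stage f S a p q) := by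
      rw [show p (firstDiff p 0) - 1 = Encodable.encode (res q (stage f S a p q)) by omega,
        Denumerable.ofNat_encode]
    simp only [reductionInput, if_neg hp0, hσ, prefixSet_res] at hq
    exact disjoint_left.1 (disjoint_avoidingPoint hav _) hq (self_mem_cylinder _ _)
  · simp only [reductionOutput, if_neg hav] at hk
    obtain ⟨i, hi, hpi⟩ : ∃ i < stage f S a p q, p i ≠ 0 := by
      simpa [mem_cylinder_iff] using hstop.resolve_left hav
    have := Finset.le_sup (f := p) (Finset.mem_range.2 hi)
    rw [huniq i _ hpi hpt] at this
    omega

theorem redFO_ACCN_of_avoidableNear (ha : a ∈ domP f) (hS : S ⊆ domP f)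
    (h : ∀ q ∈ f a, ∃ m, AvoidableNear f S a (cylinder q m)) : RedFO ACCN f := by
  refine ⟨reductionInput f S a, reductionOutput f S a, continuous_reductionInput.continuousOn,
    ?_, fun p _ => ?_, fun p hp q hq => reductionOutput_mem_ACCN hp hq⟩
  · rintro ⟨p, q⟩ ⟨-, hq⟩
    refine (continuousAt_const.congr (reductionOutput_eventuallyEq ?_).symm).continuousWithinAt
    by_cases hp0 : p = 0
    · obtain ⟨m, hm⟩ := h q (by simpa [reductionInput, hp0] using hq)
      exact ⟨m, Or.inl hm⟩
    · exact ⟨_, stopsAt_of_ne_zero hp0 q⟩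
  · unfold reductionInput
    split_ifs
    exacts [ha, avoidingPoint_mem_domP ha hS _ _]

end Reduction

theorem accn_red_of_discOnSeq (f : (ℕ → ℕ) → Set (ℕ → ℕ)) (a : ℕ → ℕ)
    (aseq : ℕ → (ℕ → ℕ))
    (hconv : Filter.Tendsto aseq Filter.atTop (nhds a))
    (ha : a ∈ domP f) (han : ∀ n, aseq n ∈ domP f)
    (hdisc : ¬ ∃ F : (ℕ → ℕ) → (ℕ → ℕ),
        ContinuousOn F (Set.range aseq ∪ {a}) ∧
        ∀ x ∈ Set.range aseq ∪ {a}, F x ∈ f x) :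
    RedFO ACCN f := by
  have hS : range aseq ∪ {a} ⊆ domP f :=
    union_subset (range_subset_iff.2 han) (singleton_subset_iff.2 ha)
  refine redFO_ACCN_of_avoidableNear ha hS fun q hq => ?_
  by_contra! hbad
  have hiso : ∀ x ∈ range aseq ∪ {a}, x ≠ a → 𝓝[range aseq ∪ {a}] x = pure x :=
    fun x hx hxa => hconv.nhdsWithin_range_union_singleton_eq_pure (hx.resolve_right hxa) hxa
  exact hdisc (exists_continuousOn_selector_s3 hS hiso hq hbad)
end

section
/- Fix n ≥ 2. A problem f : (ℕ→ℕ) → Set (Fin n) is discontinuous if and only if ACC_{Fin n} ≤_W* f. -/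
/-- The domain of a problem with codomain `Fin n`. -/
def domF {n : ℕ} (f : (ℕ → ℕ) → Set (Fin n)) : Set (ℕ → ℕ) := {p | f p ≠ ∅}

/-- The problem `ACC_{Fin n}`. -/
def ACCF (n : ℕ) (p : ℕ → ℕ) : Set (Fin n) :=
  {m | ((∀ i j, p i ≠ 0 → p j ≠ 0 → p i = p j) ∧ ∀ k, p k ≤ n) ∧
    ∀ k, p k ≠ (m : ℕ) + 1}

/-- Continuity of a problem with codomain `Fin n`. -/
def FinContinuous {n : ℕ} (f : (ℕ → ℕ) → Set (Fin n)) : Prop :=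
  ∃ F : (ℕ → ℕ) → Fin n, ContinuousOn F (domF f) ∧ ∀ p ∈ domF f, F p ∈ f p

/-- Continuous Weihrauch reducibility between problems with codomain `Fin n`. -/
def RedFin {n : ℕ} (f g : (ℕ → ℕ) → Set (Fin n)) : Prop :=
  ∃ (H : (ℕ → ℕ) → (ℕ → ℕ)) (K : (ℕ → ℕ) × Fin n → Fin n),
    ContinuousOn H (domF f) ∧
    ContinuousOn K {pm : (ℕ → ℕ) × Fin n | pm.1 ∈ domF f ∧ pm.2 ∈ g (H pm.1)} ∧
    (∀ p ∈ domF f, H p ∈ domF g) ∧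
    (∀ p ∈ domF f, ∀ m ∈ g (H p), K (p, m) ∈ f p)

/-!
A problem with finite codomain is continuous exactly when every instance `x` has a cylinder
around it on which a single answer is correct everywhere: taking the shortest such cylinder
makes the chosen answer locally constant. If this fails at `x`, there are instances `Y j m`
agreeing with `x` below `j` on which `m` is wrong. The reduction of `ACC` sends the zero
sequence to `x` and a sequence whose first nonzero entry is `m + 1`, at position `j`, to `Y j m`;
it is continuous because `Y j m → x` as `j → ∞`, and every answer to `Y j m` differs from `m`,
so it is an answer to `ACC`. Conversely `ACC` is discontinuous at the zero sequence, and
continuity transfers downwards along reductions.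
-/

open PiNat Filter Topology

section Cylinder

variable {E : ℕ → Type*}

theorem cylinder_sInf_eq_of_mem {Q : Set (∀ n, E n) → Prop} {x y : ∀ n, E n}
    (hx : ∃ j, Q (cylinder x j)) (hy : y ∈ cylinder x (sInf {j | Q (cylinder x j)})) :
    cylinder y (sInf {j | Q (cylinder y j)}) = cylinder x (sInf {j | Q (cylinder x j)}) := by
  set jx := sInf {j | Q (cylinder x j)}
  have hcyl : ∀ j ≤ jx, cylinder y j = cylinder x j := fun j hj =>
    mem_cylinder_iff_eq.1 (cylinder_anti x hj hy)
  have hQy : Q (cylinder y jx) := (hcyl jx le_rfl).symm ▸ Nat.sInf_mem hx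
  have hle : sInf {j | Q (cylinder y j)} ≤ jx := Nat.sInf_le hQy
  have hge : jx ≤ sInf {j | Q (cylinder y j)} := by
    by_contra! hlt
    have hQ : Q (cylinder y (sInf {j | Q (cylinder y j)})) :=
      Nat.sInf_mem (s := {j | Q (cylinder y j)}) ⟨jx, hQy⟩
    rw [hcyl _ hlt.le] at hQ
    exact Nat.notMem_of_lt_sInf hlt hQ
  rw [le_antisymm hle hge, hcyl jx le_rfl]

variable [∀ n, TopologicalSpace (E n)] [∀ n, DiscreteTopology (E n)]

theorem cylinder_mem_nhds (x : ∀ n, E n) (j : ℕ) : cylinder x j ∈ 𝓝 x :=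
  (isOpen_cylinder E x j).mem_nhds (self_mem_cylinder x j)

theorem exists_cylinder_subset_of_mem_nhds {x : ∀ n, E n} {s : Set (∀ n, E n)} (hs : s ∈ 𝓝 x) :
    ∃ j, cylinder x j ⊆ s := by
  obtain ⟨_, ⟨y, j, rfl⟩, hx, hsub⟩ := (isTopologicalBasis_cylinders E).mem_nhds_iff.1 hs
  exact ⟨j, mem_cylinder_iff_eq.1 hx ▸ hsub⟩

end Cylinder

section Switch

variable {α : Type*} (x : ℕ → α) (Y : ℕ → ℕ → ℕ → α)

open Classical in
noncomputable def switchAtFirstNonzero (p : ℕ → ℕ) : ℕ → α :=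
  if h : ∃ k, p k ≠ 0 then Y (Nat.find h) (p (Nat.find h)) else x

theorem switchAtFirstNonzero_of_exists {p : ℕ → ℕ} (h : ∃ k, p k ≠ 0) :
    switchAtFirstNonzero x Y p = Y (Nat.find h) (p (Nat.find h)) :=
  dif_pos h

theorem switchAtFirstNonzero_eq {p : ℕ → ℕ} {k : ℕ} (hk : p k ≠ 0) (hlt : ∀ j < k, p j = 0) :
    switchAtFirstNonzero x Y p = Y k (p k) := by
  have h : ∃ k, p k ≠ 0 := ⟨k, hk⟩
  have hfind : Nat.find h = k := (Nat.find_eq_iff h).2 ⟨hk, fun j hj => not_not.2 (hlt j hj)⟩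
  rw [switchAtFirstNonzero_of_exists x Y h, hfind]

variable {x Y}

theorem switchAtFirstNonzero_mem {S : Set (ℕ → α)} (hx : x ∈ S) (hY : ∀ k v, Y k v ∈ S)
    (p : ℕ → ℕ) : switchAtFirstNonzero x Y p ∈ S := by
  unfold switchAtFirstNonzero
  split_ifs
  exacts [hY _ _, hx]

theorem switchAtFirstNonzero_apply_of_forall_le (hY : ∀ k v, Y k v ∈ cylinder x k)
    {p : ℕ → ℕ} {i : ℕ} (hp : ∀ k ≤ i, p k = 0) : switchAtFirstNonzero x Y p i = x i := by
  by_cases h : ∃ k, p k ≠ 0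
  · have hi : i < Nat.find h := by
      by_contra! hle
      exact Nat.find_spec h (hp _ hle)
    rw [switchAtFirstNonzero_of_exists x Y h]
    exact hY _ _ i hi
  · exact congrFun (dif_neg h) i

theorem switchAtFirstNonzero_apply_eq_of_mem_cylinder (hY : ∀ k v, Y k v ∈ cylinder x k)
    {p q : ℕ → ℕ} {i : ℕ} (hq : q ∈ cylinder p (i + 1)) :
    switchAtFirstNonzero x Y q i = switchAtFirstNonzero x Y p i := by
  by_cases hp : ∀ k ≤ i, p k = 0
  · rw [switchAtFirstNonzero_apply_of_forall_le hY hp,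
      switchAtFirstNonzero_apply_of_forall_le hY fun k hk => (hq k (by omega)).trans (hp k hk)]
  · push Not at hp
    set k := Nat.find hp
    have hk : k ≤ i ∧ p k ≠ 0 := Nat.find_spec hp
    have hmin : ∀ j < k, p j = 0 := fun j hj => by
      by_contra hne
      exact Nat.find_min hp hj ⟨by omega, hne⟩
    have hqp : ∀ j ≤ k, q j = p j := fun j hj => hq j (by omega)
    rw [switchAtFirstNonzero_eq x Y hk.2 hmin,
      switchAtFirstNonzero_eq x Y ((hqp k le_rfl).symm ▸ hk.2)
        fun j hj => (hqp j hj.le).trans (hmin j hj), hqp k le_rfl]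

theorem continuous_switchAtFirstNonzero [TopologicalSpace α] (hY : ∀ k v, Y k v ∈ cylinder x k) :
    Continuous (switchAtFirstNonzero x Y) :=
  continuous_pi fun i => continuous_iff_continuousAt.2 fun p => EventuallyEq.continuousAt <|
    eventually_of_mem (cylinder_mem_nhds p (i + 1)) fun _ hq =>
      switchAtFirstNonzero_apply_eq_of_mem_cylinder hY hq

end Switch

section Problems

variable {n : ℕ}

def SolvesOn (f : (ℕ → ℕ) → Set (Fin n)) (C : Set (ℕ → ℕ)) (m : Fin n) : Prop :=
  ∀ z ∈ domF f, z ∈ C → m ∈ f z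

theorem FinContinuous.exists_solvesOn {f : (ℕ → ℕ) → Set (Fin n)} (hf : FinContinuous f)
    {x : ℕ → ℕ} (hx : x ∈ domF f) : ∃ j m, SolvesOn f (cylinder x j) m := by
  obtain ⟨F, hFc, hFf⟩ := hf
  have hloc : ∀ᶠ z in 𝓝 x, z ∈ domF f → F z = F x := by
    have := hFc x hx
    rwa [ContinuousWithinAt, nhds_discrete, tendsto_pure, eventually_nhdsWithin_iff] at this
  obtain ⟨j, hj⟩ := exists_cylinder_subset_of_mem_nhds hloc
  exact ⟨j, F x, fun z hz hzj => hj hzj hz ▸ hFf z hz⟩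

theorem finContinuous_of_forall_exists_solvesOn [NeZero n] {f : (ℕ → ℕ) → Set (Fin n)}
    (h : ∀ x ∈ domF f, ∃ j m, SolvesOn f (cylinder x j) m) : FinContinuous f := by
  let J : (ℕ → ℕ) → ℕ := fun x => sInf {j | ∃ m, SolvesOn f (cylinder x j) m}
  let F : (ℕ → ℕ) → Fin n := fun x => Classical.epsilon (SolvesOn f (cylinder x (J x)))
  refine ⟨F, fun x hx => ?_, fun x hx => ?_⟩
  · refine ContinuousAt.continuousWithinAt (EventuallyEq.continuousAt (y := F x) ?_)
    filter_upwards [cylinder_mem_nhds x (J x)] with y hy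
    simp only [F, J, cylinder_sInf_eq_of_mem (Q := fun C => ∃ m, SolvesOn f C m) (h x hx) hy]
  · exact Classical.epsilon_spec (Nat.sInf_mem (h x hx)) x hx (self_mem_cylinder _ _)

theorem FinContinuous.of_redFin {f g : (ℕ → ℕ) → Set (Fin n)} (hf : FinContinuous f)
    (hgf : RedFin g f) : FinContinuous g := by
  obtain ⟨H, K, hH, hK, hHdom, hKsol⟩ := hgf
  obtain ⟨F, hF, hFsol⟩ := hf
  exact ⟨fun p => K (p, F (H p)),
    hK.comp (continuousOn_id.prodMk (hF.comp hH hHdom)) fun p hp => ⟨hp, hFsol _ (hHdom p hp)⟩,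
    fun p hp => hKsol p hp _ (hFsol _ (hHdom p hp))⟩

theorem mem_domF_ACCF_iff (hn : 2 ≤ n) {p : ℕ → ℕ} :
    p ∈ domF (ACCF n) ↔ (∀ i j, p i ≠ 0 → p j ≠ 0 → p i = p j) ∧ ∀ k, p k ≤ n := by
  refine ⟨fun hp => ?_, fun hp => ?_⟩
  · obtain ⟨m, hm⟩ := Set.nonempty_iff_ne_empty.2 hp
    exact hm.1
  · -- `p` takes at most one nonzero value, so `0` or `1` is an answer
    classical
    refine Set.nonempty_iff_ne_empty.1
      ⟨if ∃ k, p k = 1 then ⟨1, hn⟩ else ⟨0, by omega⟩, hp, fun k hk => ?_⟩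
    split_ifs at hk with h1
    · obtain ⟨k', hk'⟩ := h1
      have hk2 : p k = 2 := hk
      have := hp.1 k k' (by omega) (by omega)
      omega
    · exact h1 ⟨k, hk⟩

theorem not_finContinuous_ACCF (hn : 2 ≤ n) : ¬ FinContinuous (ACCF n) := by
  intro hc
  have h0 : (0 : ℕ → ℕ) ∈ domF (ACCF n) :=
    (mem_domF_ACCF_iff hn).2 ⟨fun i _ hi => absurd rfl hi, fun _ => Nat.zero_le n⟩
  obtain ⟨j, m, hm⟩ := hc.exists_solvesOn h0
  let q : ℕ → ℕ := fun k => if k < j then 0 else m + 1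
  have hq : q ∈ domF (ACCF n) := by
    refine (mem_domF_ACCF_iff hn).2 ⟨fun i k hi hk => ?_, fun k => ?_⟩
    · simp only [q] at hi hk ⊢
      split_ifs at hi hk ⊢ <;> simp_all
    · have := m.isLt
      dsimp [q]
      split_ifs <;> omega
  exact (hm q hq fun i hi => if_pos hi).2 j (if_neg (lt_irrefl j))

theorem redFin_ACCF_of_not_solvesOn (hn : 2 ≤ n) {f : (ℕ → ℕ) → Set (Fin n)} {x : ℕ → ℕ}
    (hx : x ∈ domF f) (hbad : ∀ j m, ¬ SolvesOn f (cylinder x j) m) : RedFin (ACCF n) f := by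
  have : NeZero n := ⟨by omega⟩
  simp only [SolvesOn, not_forall, exists_prop] at hbad
  choose Y hYdom hYcyl hYm using hbad
  refine ⟨switchAtFirstNonzero x fun k v => Y k (Fin.ofNat n (v - 1)), Prod.snd,
    (continuous_switchAtFirstNonzero fun _ _ => hYcyl _ _).continuousOn,
    continuous_snd.continuousOn, fun p _ => switchAtFirstNonzero_mem hx (fun _ _ => hYdom _ _) p,
    fun p hp m hm => ⟨(mem_domF_ACCF_iff hn).1 hp, fun k hk => ?_⟩⟩
  have hex : ∃ k, p k ≠ 0 := ⟨k, by omega⟩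
  have hfirst : p (Nat.find hex) = m + 1 :=
    ((mem_domF_ACCF_iff hn).1 hp).1 _ _ (Nat.find_spec hex) (by omega) |>.trans hk
  rw [switchAtFirstNonzero_of_exists _ _ hex, hfirst, Nat.add_sub_cancel, Fin.ofNat_val_eq_self]
    at hm
  exact hYm _ _ hm

end Problems

theorem fin_discontinuous_iff_accf (n : ℕ) (hn : 2 ≤ n)
    (f : (ℕ → ℕ) → Set (Fin n)) :
    ¬ FinContinuous f ↔ RedFin (ACCF n) f := by
  have : NeZero n := ⟨by omega⟩
  refine ⟨fun hf => ?_, fun hred hf => not_finContinuous_ACCF hn (hf.of_redFin hred)⟩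
  obtain ⟨x, hx, hbad⟩ : ∃ x ∈ domF f, ∀ j m, ¬ SolvesOn f (cylinder x j) m := by
    by_contra! h
    exact hf (finContinuous_of_forall_exists_solvesOn h)
  exact redFin_ACCF_of_not_solvesOn hn hx hbad
end

section
/- For every first-order problem f : (ℕ→ℕ) → Set ℕ, Player II has a winning strategy in the Wadge game for f if and only if f is continuous. -/
/-- The histories `([x 0, …, x (k-1)], [y 0, …, y (k-1)])` after `k` rounds of the
play of Player I's strategy `σ` against Player II's strategy `τ` in the Wadge game. -/
def hist (σ : List (Option ℕ) → ℕ) (τ : List ℕ → Option ℕ) :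
    ℕ → List ℕ × List (Option ℕ)
  | 0 => ([], [])
  | k + 1 =>
    let h := hist σ τ k
    let xk := σ h.2
    (h.1 ++ [xk], h.2 ++ [τ (h.1 ++ [xk])])

/-- Player I's moves in the play of `σ` against `τ`. -/
def playX (σ : List (Option ℕ) → ℕ) (τ : List ℕ → Option ℕ) (k : ℕ) : ℕ :=
  σ (hist σ τ k).2

/-- Player II's moves in the play of `σ` against `τ`. -/
def playY (σ : List (Option ℕ) → ℕ) (τ : List ℕ → Option ℕ) (k : ℕ) : Option ℕ :=
  τ ((hist σ τ k).1 ++ [playX σ τ k])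

/-- Player II wins the play of `σ` against `τ` in the Wadge game for `f`. -/
def IIWins (f : (ℕ → ℕ) → Set ℕ) (σ : List (Option ℕ) → ℕ)
    (τ : List ℕ → Option ℕ) : Prop :=
  playX σ τ ∉ domFO f ∨
    ({k | playY σ τ k ≠ none}.Infinite ∧
      ∃ k n, playY σ τ k = some n ∧ (∀ j < k, playY σ τ j = none) ∧
        n ∈ f (playX σ τ))

/-! ### Auxiliary material -/

open Classical

lemma hist_eq (σ : List (Option ℕ) → ℕ) (τ : List ℕ → Option ℕ) (k : ℕ) :
    hist σ τ k = ((List.range k).map (playX σ τ), (List.range k).map (playY σ τ)) := by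
  induction k with
  | zero => simp [hist]
  | succ k ih =>
    rw [hist]
    simp only [List.range_succ, List.map_append, List.map_cons, List.map_nil]
    refine Prod.ext ?_ ?_
    · simp [ih, playX]
    · simp [ih, playY, playX]

/-- Player I's strategy that just plays `p` regardless of II's moves. -/
def sigOf (p : ℕ → ℕ) : List (Option ℕ) → ℕ := fun l => p l.length

lemma playX_sigOf (p : ℕ → ℕ) (τ : List ℕ → Option ℕ) (k : ℕ) :
    playX (sigOf p) τ k = p k := by
  simp [playX, sigOf, hist_eq]

lemma hist_sigOf_congr (τ : List ℕ → Option ℕ) {p q : ℕ → ℕ} :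
    ∀ {k : ℕ}, (∀ i < k, p i = q i) → hist (sigOf p) τ k = hist (sigOf q) τ k := by
  intro k
  induction k with
  | zero => intro _; rfl
  | succ k ih =>
    intro h
    have ih' := ih (fun i hi => h i (hi.trans (Nat.lt_succ_self k)))
    rw [hist, hist, ih']
    have hlen : (hist (sigOf q) τ k).2.length = k := by simp [hist_eq]
    have hs : sigOf p (hist (sigOf q) τ k).2 = sigOf q (hist (sigOf q) τ k).2 := by
      simp [sigOf, hlen, h k (Nat.lt_succ_self k)]
    simp [hs]

lemma playY_sigOf_congr (τ : List ℕ → Option ℕ) {p q : ℕ → ℕ} {k : ℕ}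
    (h : ∀ i ≤ k, p i = q i) :
    playY (sigOf p) τ k = playY (sigOf q) τ k := by
  have hh := hist_sigOf_congr τ (k := k) (fun i hi => h i (le_of_lt hi))
  have hx : playX (sigOf p) τ k = playX (sigOf q) τ k := by
    rw [playX_sigOf, playX_sigOf, h k le_rfl]
  rw [playY, playY, hh, hx]

/-- The continuous choice function extracted from a winning strategy for II. -/
noncomputable def FOf (τ : List ℕ → Option ℕ) (p : ℕ → ℕ) : ℕ :=
  if h : ∃ k, (playY (sigOf p) τ k).isSome then
    (playY (sigOf p) τ (Nat.find h)).get (Nat.find_spec h)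
  else 0

lemma FOf_spec {f : (ℕ → ℕ) → Set ℕ} {τ : List ℕ → Option ℕ}
    (hτ : ∀ σ, IIWins f σ τ) {p : ℕ → ℕ} (hp : p ∈ domFO f) :
    ∃ k, playY (sigOf p) τ k = some (FOf τ p) ∧
      (∀ j < k, playY (sigOf p) τ j = none) ∧ FOf τ p ∈ f p := by
  have hx : playX (sigOf p) τ = p := funext fun k => playX_sigOf p τ k
  rcases hτ (sigOf p) with h | ⟨-, k, n, hk, hfirst, hn⟩
  · rw [hx] at h; exact absurd hp h
  rw [hx] at hn
  have h : ∃ k, (playY (sigOf p) τ k).isSome := ⟨k, by rw [hk]; rfl⟩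
  have hfind : Nat.find h = k := by
    refine le_antisymm (Nat.find_le (by rw [hk]; rfl)) ?_
    by_contra hlt
    push_neg at hlt
    have := hfirst _ hlt
    have := Nat.find_spec h
    simp [hfirst _ hlt] at this
  have hval : FOf τ p = n := by
    rw [FOf, dif_pos h]
    simp [hfind, hk]
  exact ⟨k, by rw [hval]; exact hk, hfirst, hval ▸ hn⟩


lemma FOf_local {f : (ℕ → ℕ) → Set ℕ} {τ : List ℕ → Option ℕ}
    (hτ : ∀ σ, IIWins f σ τ) {p : ℕ → ℕ} (hp : p ∈ domFO f) {k : ℕ}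
    (hk : playY (sigOf p) τ k = some (FOf τ p))
    (hfirst : ∀ j < k, playY (sigOf p) τ j = none)
    {q : ℕ → ℕ} (hq : q ∈ domFO f) (hagree : ∀ i ≤ k, q i = p i) :
    FOf τ q = FOf τ p := by
  obtain ⟨k', hk', hfirst', -⟩ := FOf_spec hτ hq
  have hYeq : ∀ j ≤ k, playY (sigOf q) τ j = playY (sigOf p) τ j := fun j hj =>
    playY_sigOf_congr τ (fun i hi => hagree i (hi.trans hj))
  have hkk : k' = k := by
    rcases lt_trichotomy k' k with h | h | h
    · have := hfirst _ h
      rw [← hYeq _ h.le, hk'] at this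
      exact absurd this (by simp)
    · exact h
    · have := hfirst' _ h
      rw [hYeq _ le_rfl, hk] at this
      exact absurd this (by simp)
  subst hkk
  have := hk'
  rw [hYeq _ le_rfl, hk] at this
  exact (Option.some_injective _ this).symm

lemma eventually_agree (p : ℕ → ℕ) (k : ℕ) :
    ∀ᶠ q in nhds p, ∀ i ≤ k, q i = p i := by
  have h : ∀ i : ℕ, ∀ᶠ q : ℕ → ℕ in nhds p, q i = p i := by
    intro i
    have hopen : IsOpen ((fun q : ℕ → ℕ => q i) ⁻¹' {p i}) :=
      (isOpen_discrete _).preimage (continuous_apply i)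
    exact hopen.mem_nhds rfl
  have h2 : ∀ᶠ q in nhds p, ∀ i ∈ Finset.range (k + 1), q i = p i :=
    (Filter.eventually_all_finset _).mpr (fun i _ => h i)
  exact h2.mono fun q hq i hi => hq i (Finset.mem_range.mpr (Nat.lt_succ_of_le hi))

/-! ### Backward direction material -/

/-- `p` extends the finite sequence `l`. -/
def ExtL (l : List ℕ) (p : ℕ → ℕ) : Prop := ∀ i < l.length, p i = l.getD i 0

/-- `l` determines the value of `F` on the domain of `f`. -/
def Trig (f : (ℕ → ℕ) → Set ℕ) (F : (ℕ → ℕ) → ℕ) (l : List ℕ) : Prop :=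
  (∃ p, p ∈ domFO f ∧ ExtL l p) ∧
    ∀ p q, p ∈ domFO f → q ∈ domFO f → ExtL l p → ExtL l q → F p = F q

/-- Player II's strategy from a continuous choice function. -/
noncomputable def tauOf (f : (ℕ → ℕ) → Set ℕ) (F : (ℕ → ℕ) → ℕ) (l : List ℕ) :
    Option ℕ :=
  if h : ∃ j, Trig f F (l.take j) then
    some (F (Classical.choose (Nat.find_spec h).1))
  else none

lemma ExtL_take {l : List ℕ} {x : ℕ → ℕ} (h : ExtL l x) (j : ℕ) :
    ExtL (l.take j) x := by
  intro i hi
  have hi' : i < l.length := lt_of_lt_of_le hi (by simpa using (List.length_take j l).le.trans (min_le_right _ _))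
  rw [h i hi']
  rw [List.getD_eq_getElem _ _ hi, List.getD_eq_getElem _ _ hi', List.getElem_take]

lemma tauOf_correct {f : (ℕ → ℕ) → Set ℕ} {F : (ℕ → ℕ) → ℕ} {l : List ℕ} {n : ℕ}
    (h : tauOf f F l = some n) {x : ℕ → ℕ} (hx : x ∈ domFO f) (hex : ExtL l x) :
    n = F x := by
  rw [tauOf] at h
  by_cases hh : ∃ j, Trig f F (l.take j)
  · rw [dif_pos hh] at h
    set j₀ := Nat.find hh with hj₀
    have hsp := Nat.find_spec hh
    obtain ⟨hp, hep⟩ := Classical.choose_spec hsp.1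
    have hFx := hsp.2 (Classical.choose hsp.1) x hp hx hep (ExtL_take hex j₀)
    rw [← Option.some.inj h, hFx]
  · rw [dif_neg hh] at h
    exact absurd h (by simp)

lemma exists_cyl {f : (ℕ → ℕ) → Set ℕ} {F : (ℕ → ℕ) → ℕ}
    (hF : ContinuousOn F (domFO f)) {x : ℕ → ℕ} (hx : x ∈ domFO f) :
    ∃ n₀, ∀ q ∈ domFO f, (∀ i < n₀, q i = x i) → F q = F x := by
  have h1 : F ⁻¹' {F x} ∈ nhdsWithin x (domFO f) :=
    (hF x hx) ((isOpen_discrete {F x}).mem_nhds rfl)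
  rw [mem_nhdsWithin] at h1
  obtain ⟨U, hUo, hxU, hsub⟩ := h1
  obtain ⟨I, u, hI, hpi⟩ := isOpen_pi_iff.mp hUo x hxU
  refine ⟨I.sup id + 1, fun q hq hagree => ?_⟩
  have hqU : q ∈ U := by
    apply hpi
    intro i hi
    rw [hagree i (Nat.lt_succ_of_le (Finset.le_sup (f := id) hi))]
    exact (hI i hi).2
  exact hsub ⟨hqU, hq⟩

lemma ExtL_map_range (x : ℕ → ℕ) (m : ℕ) : ExtL ((List.range m).map x) x := by
  intro i hi
  simp only [List.length_map, List.length_range] at hi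
  rw [List.getD_eq_getElem _ _ (by simpa using hi)]
  simp

theorem playerII_wins_iff_continuous (f : (ℕ → ℕ) → Set ℕ) :
    (∃ τ : List ℕ → Option ℕ, ∀ σ : List (Option ℕ) → ℕ, IIWins f σ τ) ↔
      FOContinuous f := by
  constructor
  · rintro ⟨τ, hτ⟩
    refine ⟨FOf τ, ?_, fun p hp => (FOf_spec hτ hp).choose_spec.2.2⟩
    intro p hp
    obtain ⟨k, hk, hfirst, -⟩ := FOf_spec hτ hp
    have hev : ∀ᶠ q in nhdsWithin p (domFO f), FOf τ q = FOf τ p := by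
      filter_upwards [nhdsWithin_le_nhds (eventually_agree p k), self_mem_nhdsWithin]
        with q hq1 hq2
      exact FOf_local hτ hp hk hfirst hq2 hq1
    exact Filter.Tendsto.congr' (hev.mono fun q h => h.symm) tendsto_const_nhds
  · rintro ⟨F, hF, hchoice⟩
    refine ⟨tauOf f F, fun σ => ?_⟩
    by_cases hx : playX σ (tauOf f F) ∈ domFO f
    swap
    · exact Or.inl hx
    right
    set τ := tauOf f F with hτdef
    set x := playX σ τ with hxdef
    obtain ⟨n₀, hn₀⟩ := exists_cyl hF hx
    have htrig : ∀ m, n₀ ≤ m → Trig f F ((List.range m).map x) := by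
      intro m hm
      constructor
      · exact ⟨x, hx, ExtL_map_range x m⟩
      · intro p q hp hq hep heq
        have hlm : ((List.range m).map x).length = m := by simp
        have hagp : ∀ i < n₀, p i = x i := by
          intro i hi
          rw [hep i (by rw [hlm]; exact lt_of_lt_of_le hi hm)]
          rw [List.getD_eq_getElem _ _ (by rw [hlm]; exact lt_of_lt_of_le hi hm)]
          simp
        have hagq : ∀ i < n₀, q i = x i := by
          intro i hi
          rw [heq i (by rw [hlm]; exact lt_of_lt_of_le hi hm)]
          rw [List.getD_eq_getElem _ _ (by rw [hlm]; exact lt_of_lt_of_le hi hm)]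
          simp
        rw [hn₀ p hp hagp, hn₀ q hq hagq]
    have hplayY : ∀ k, playY σ τ k = tauOf f F ((List.range (k + 1)).map x) := by
      intro k
      rw [playY]
      have h1 : (hist σ τ k).1 = (List.range k).map x := by rw [hist_eq]
      rw [h1, ← hxdef]
      congr 1
      rw [List.range_succ, List.map_append]
      rfl
    have hsome : ∀ k, n₀ ≤ k → playY σ τ k ≠ none := by
      intro k hk
      rw [hplayY k]
      have hex : ∃ j, Trig f F (((List.range (k + 1)).map x).take j) := by
        refine ⟨n₀, ?_⟩
        have : ((List.range (k + 1)).map x).take n₀ = (List.range n₀).map x := by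
          rw [← List.map_take, List.take_range, Nat.min_eq_left (by omega)]
        rw [this]
        exact htrig n₀ le_rfl
      rw [tauOf, dif_pos hex]
      simp
    refine ⟨?_, ?_⟩
    · exact (Set.Ici_infinite n₀).mono fun k hk => hsome k hk
    · have hne : ∃ k, playY σ τ k ≠ none := ⟨n₀, hsome n₀ le_rfl⟩
      set k₀ := Nat.find hne with hk₀
      obtain ⟨n, hn⟩ := Option.ne_none_iff_exists'.mp (Nat.find_spec hne)
      refine ⟨k₀, n, hn, fun j hj => ?_, ?_⟩
      · have := Nat.find_min hne hj
        simpa using this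
      · have hcor : n = F x := by
          apply tauOf_correct (hplayY k₀ ▸ hn) hx
          exact ExtL_map_range x (k₀ + 1)
        rw [hcor]
        exact hchoice x hx
end

section
/- A first-order problem f : (ℕ→ℕ) → Set ℕ is continuous if and only if for every x ∈ dom f there exist m ∈ ℕ and i ∈ ℕ such that i ∈ f y for every y ∈ dom f with y j = x j for all j < m. -/
open Classical

theorem first_order_continuous_iff_locally_constant_choice (f : (ℕ → ℕ) → Set ℕ) :
    FOContinuous f ↔
      ∀ x ∈ domFO f, ∃ m i : ℕ,
        ∀ y ∈ domFO f, (∀ j < m, y j = x j) → i ∈ f y := by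
  constructor
  · rintro ⟨F, hF, hmem⟩ x hx
    have hcw : Filter.Tendsto F (nhdsWithin x (domFO f)) (nhds (F x)) := hF x hx
    have h1 : F ⁻¹' {F x} ∈ nhdsWithin x (domFO f) := by
      apply hcw
      exact IsOpen.mem_nhds (isOpen_discrete _) rfl
    obtain ⟨U, hUopen, hxU, hU⟩ := mem_nhdsWithin.mp h1
    have hUnhds : U ∈ nhds x := hUopen.mem_nhds hxU
    rw [nhds_pi, Filter.mem_pi] at hUnhds
    obtain ⟨I, hIfin, t, ht, hsub⟩ := hUnhds
    obtain ⟨m, hm⟩ := hIfin.bddAbove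
    refine ⟨m + 1, F x, fun y hy hagree => ?_⟩
    have hyU : y ∈ U := by
      apply hsub
      intro i hi
      have : y i = x i := hagree i (Nat.lt_succ_of_le (hm hi))
      rw [this]
      exact mem_of_mem_nhds (ht i)
    have : F y = F x := hU ⟨hyU, hy⟩
    rw [← this]
    exact hmem y hy
  · intro h
    set P : (ℕ → ℕ) → ℕ → Prop := fun p n =>
      ∀ y ∈ domFO f, (∀ j < (Nat.unpair n).1, y j = p j) → (Nat.unpair n).2 ∈ f y with hP
    have hex : ∀ p, p ∈ domFO f → ∃ n, P p n := by
      intro p hp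
      obtain ⟨m, i, hi⟩ := h p hp
      exact ⟨Nat.pair m i, by simpa [hP] using hi⟩
    -- transfer of P along agreement
    have htrans : ∀ p q : (ℕ → ℕ), ∀ N n : ℕ, n < N → (∀ j < N, q j = p j) →
        P p n → P q n := by
      intro p q N n hnN hagree hPn y hy hagy
      apply hPn y hy
      intro j hj
      rw [hagy j hj, hagree j (lt_of_le_of_lt (le_trans (le_of_lt hj)
        (le_trans (Nat.unpair_left_le n) (le_refl n))) hnN)]
    refine ⟨fun p => if hp : ∃ n, P p n then (Nat.unpair (Nat.find hp)).2 else 0, ?_, ?_⟩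
    · intro p hp
      have hpe := hex p hp
      set N := Nat.find hpe + 1 with hN
      have hVopen : IsOpen {q : ℕ → ℕ | ∀ j < N, q j = p j} := by
        have : {q : ℕ → ℕ | ∀ j < N, q j = p j} =
            Set.pi (↑(Finset.range N)) (fun j => {p j}) := by
          ext q; simp [Set.mem_pi]
        rw [this]
        exact isOpen_set_pi (Finset.range N).finite_toSet (fun i _ => isOpen_discrete _)
      have hkey : ∀ q ∈ domFO f, (∀ j < N, q j = p j) →
          (if hq : ∃ n, P q n then (Nat.unpair (Nat.find hq)).2 else 0) =
          (if hp' : ∃ n, P p n then (Nat.unpair (Nat.find hp')).2 else 0) := by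
        intro q hq hagree
        have hqe := hex q hq
        rw [dif_pos hqe, dif_pos hpe]
        have hagree' : ∀ j < N, p j = q j := fun j hj => (hagree j hj).symm
        have h1 : Nat.find hqe ≤ Nat.find hpe :=
          Nat.find_le (htrans p q N _ (Nat.lt_succ_self _) hagree (Nat.find_spec hpe))
        have h2 : Nat.find hpe ≤ Nat.find hqe :=
          Nat.find_le (htrans q p N _ (lt_of_le_of_lt h1 (Nat.lt_succ_self _)) hagree'
            (Nat.find_spec hqe))
        rw [le_antisymm h1 h2]
      apply Filter.Tendsto.congr' (f₁ := fun _ =>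
          if hp' : ∃ n, P p n then (Nat.unpair (Nat.find hp')).2 else 0)
      · have hV : {q : ℕ → ℕ | ∀ j < N, q j = p j} ∈ nhdsWithin p (domFO f) :=
          mem_nhdsWithin_of_mem_nhds (hVopen.mem_nhds (fun j _ => rfl))
        filter_upwards [hV, self_mem_nhdsWithin] with q hqV hqd
        exact (hkey q hqd hqV).symm
      · exact tendsto_const_nhds
    · intro p hp
      have hpe := hex p hp
      show (if hp : ∃ n, P p n then (Nat.unpair (Nat.find hp)).2 else 0) ∈ f p
      rw [dif_pos hpe]
      exact Nat.find_spec hpe p hp (fun j _ => rfl)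
end

section
/- Π⁰₂ACC_ℕ is not continuously Weihrauch reducible to C_ℕ: ¬(Π⁰₂ACC_ℕ ≤_W* C_ℕ). -/
/-- Continuous Weihrauch reducibility between first-order problems. -/
def RedFOFO (f g : (ℕ → ℕ) → Set ℕ) : Prop :=
  ∃ (H : (ℕ → ℕ) → (ℕ → ℕ)) (K : (ℕ → ℕ) × ℕ → ℕ),
    ContinuousOn H (domFO f) ∧
    ContinuousOn K {pn : (ℕ → ℕ) × ℕ | pn.1 ∈ domFO f ∧ pn.2 ∈ g (H pn.1)} ∧
    (∀ p ∈ domFO f, H p ∈ domFO g) ∧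
    (∀ p ∈ domFO f, ∀ n ∈ g (H p), K (p, n) ∈ f p)

/-- Closed choice on the naturals. -/
def CN (p : ℕ → ℕ) : Set ℕ := {n | ∀ k, p k ≠ n + 1}

/-- `Π⁰₂ACC_ℕ`: find a number to which the input sequence does not converge. -/
def Pi02ACCN (p : ℕ → ℕ) : Set ℕ := {k | ¬ ∃ N, ∀ n ≥ N, p n = k}

/-!
Let `(H, K)` be a reduction. Since `Π⁰₂ACC_ℕ` is total, `H` is continuous everywhere. The closed
sets `{p | n ∈ C_ℕ (H p)}` cover Baire space, so by the Baire category theorem one of them contains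
a nonempty open set `W`. On `W` the answer `n` is always valid, hence `K (·, n)` is continuous there
and takes a constant value `c` on a nonempty open `W' ⊆ W`. But `W'` contains a sequence that is
eventually `c`, and for it `c` is a wrong answer.
-/

open Filter Set

theorem notMem_Pi02ACCN_iff {p : ℕ → ℕ} {k : ℕ} : k ∉ Pi02ACCN p ↔ ∀ᶠ n in atTop, p n = k := by
  simp [Pi02ACCN, eventually_atTop]

theorem domFO_Pi02ACCN : domFO Pi02ACCN = univ := by
  refine eq_univ_of_forall fun p hp => ?_
  have hlim (k : ℕ) : ∀ᶠ n in atTop, p n = k :=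
    notMem_Pi02ACCN_iff.1 (hp ▸ notMem_empty k)
  obtain ⟨n, h0, h1⟩ := ((hlim 0).and (hlim 1)).exists
  omega

theorem isClosed_setOf_mem_CN (n : ℕ) : IsClosed {p : ℕ → ℕ | n ∈ CN p} := by
  have h : {p : ℕ → ℕ | n ∈ CN p} = ⋂ k, (fun p => p k) ⁻¹' {n + 1}ᶜ := by
    ext
    simp [CN]
  rw [h]
  exact isClosed_iInter fun k => (isClosed_discrete _).preimage (continuous_apply k)

theorem dense_setOf_eventually_eq {α : Type*} [TopologicalSpace α] (c : α) :
    Dense {q : ℕ → α | ∀ᶠ n in atTop, q n = c} := by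
  refine fun x => mem_closure_of_tendsto (f := fun N i => if i < N then x i else c)
    (b := atTop) (tendsto_pi_nhds.2 fun i => ?_) (Eventually.of_forall fun N => ?_)
  · exact tendsto_const_nhds.congr' <| (eventually_gt_atTop i).mono fun N h => (if_pos h).symm
  · exact (eventually_ge_atTop N).mono fun i hi => if_neg (not_lt.2 hi)

theorem exists_nonempty_interior_setOf_mem_CN {X : Type*} [TopologicalSpace X] [BaireSpace X]
    [Nonempty X] {h : X → ℕ → ℕ} (hh : Continuous h) (hne : ∀ x, CN (h x) ≠ ∅) :
    ∃ n, (interior {x | n ∈ CN (h x)}).Nonempty :=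
  nonempty_interior_of_iUnion_of_closed (fun n => (isClosed_setOf_mem_CN n).preimage hh)
    (iUnion_eq_univ_iff.2 fun x => nonempty_iff_ne_empty.2 (hne x))

theorem pi02accn_not_red_cn : ¬ RedFOFO Pi02ACCN CN := by
  rintro ⟨H, K, hH, hK, hdom, hcorr⟩
  have htot (p : ℕ → ℕ) : p ∈ domFO Pi02ACCN := domFO_Pi02ACCN ▸ mem_univ p
  rw [domFO_Pi02ACCN, continuousOn_univ] at hH
  obtain ⟨n, p, hp⟩ := exists_nonempty_interior_setOf_mem_CN hH fun p => hdom p (htot p)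
  set W := interior {p | n ∈ CN (H p)}
  have hW : W ⊆ {p | n ∈ CN (H p)} := interior_subset
  have hKW : ContinuousOn (fun q => K (q, n)) W :=
    hK.comp (Continuous.prodMk_left n).continuousOn fun q hq => ⟨htot q, hW hq⟩
  obtain ⟨q, ⟨hqW, hqK⟩, hq⟩ := (dense_setOf_eventually_eq (K (p, n))).inter_open_nonempty _
    (hKW.isOpen_inter_preimage isOpen_interior (isOpen_discrete {K (p, n)})) ⟨p, hp, rfl⟩
  exact notMem_Pi02ACCN_iff.2 hq (hqK ▸ hcorr q (htot q) n (hW hqW))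
end

section
/- LPO is not strongly continuously Weihrauch reducible to Neg: there do not exist H : (ℕ→ℕ) → (ℕ→ℕ) continuous and K : (ℕ→ℕ) → ℕ continuous on ⋃_p Neg (H p) (ℕ discrete) such that for every p and every q ∈ Neg (H p), K q ∈ LPO p. -/
open Classical in
/-- `LPO`: decide whether the input is identically zero. -/
noncomputable def LPO (p : ℕ → ℕ) : Set ℕ :=
  {if ∀ n, p n = 0 then 0 else 1}

/-- The negation map of Sierpiński space in its standard representation, where a
name `p` denotes `⊤` iff `p` is not identically `0`. -/
def NegS (p : ℕ → ℕ) : Set (ℕ → ℕ) :=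
  {q | (∀ n, q n = 0) ↔ ¬ ∀ n, p n = 0}

/-- The sequences `qk k` (1 at position `k`, else 0) converge to the zero
sequence; if `K` is continuous on `S`, all points lie in `S`, `K` is `a` at
zero and constantly `b` on the `qk k`, then `a = b`. -/
lemma aux_cont (K : (ℕ → ℕ) → ℕ) (S : Set (ℕ → ℕ)) (hK : ContinuousOn K S)
    (hZ : (fun _ => 0) ∈ S)
    (hq : ∀ k : ℕ, (fun n => if n = k then 1 else 0) ∈ S)
    (a b : ℕ) (hKZ : K (fun _ => 0) = a)
    (hKq : ∀ k : ℕ, K (fun n => if n = k then 1 else 0) = b) : a = b := by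
  set Z : ℕ → ℕ := fun _ => 0 with hZdef
  set q : ℕ → ℕ → ℕ := fun k n => if n = k then 1 else 0 with hqdef
  have htend : Filter.Tendsto q Filter.atTop (nhds Z) := by
    rw [tendsto_pi_nhds]
    intro n
    have : ∀ᶠ k in Filter.atTop, Z n = q k n := by
      filter_upwards [Filter.eventually_ge_atTop (n + 1)] with k hk
      simp only [hqdef, hZdef]
      have : n ≠ k := by omega
      simp [this]
    exact Filter.Tendsto.congr' this tendsto_const_nhds
  have htendS : Filter.Tendsto q Filter.atTop (nhdsWithin Z S) := by
    rw [tendsto_nhdsWithin_iff]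
    exact ⟨htend, Filter.Eventually.of_forall hq⟩
  have h1 : Filter.Tendsto (fun k => K (q k)) Filter.atTop (nhds (K Z)) :=
    (hK Z hZ).tendsto.comp htendS
  have h2 : Filter.Tendsto (fun k => K (q k)) Filter.atTop (nhds b) := by
    have : (fun k => K (q k)) = fun _ => b := funext fun k => hKq k
    rw [this]; exact tendsto_const_nhds
  rw [hKZ] at h1
  exact tendsto_nhds_unique h1 h2

theorem lpo_not_strongly_red_neg :
    ¬ ∃ (H : (ℕ → ℕ) → (ℕ → ℕ)) (K : (ℕ → ℕ) → ℕ),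
      Continuous H ∧
      ContinuousOn K (⋃ p : ℕ → ℕ, NegS (H p)) ∧
      ∀ p : ℕ → ℕ, ∀ q ∈ NegS (H p), K q ∈ LPO p := by
  rintro ⟨H, K, -, hK, hcorr⟩
  set S : Set (ℕ → ℕ) := ⋃ p : ℕ → ℕ, NegS (H p) with hS
  set Z : ℕ → ℕ := fun _ => 0 with hZdef
  set O : ℕ → ℕ := fun _ => 1 with hOdef
  have hZzero : ∀ n, Z n = 0 := fun n => rfl
  have hOne : ¬ ∀ n, O n = 0 := fun h => by simpa [hOdef] using h 0
  have hqk : ∀ k : ℕ, ¬ ∀ n, (fun n => if n = k then 1 else 0) n = 0 := by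
    intro k h; simpa using h k
  by_cases h0 : ∀ n, H Z n = 0
  · by_cases h1 : ∃ p, (¬ ∀ n, p n = 0) ∧ ∀ n, H p n = 0
    · obtain ⟨p, hp, hHp⟩ := h1
      have m1 : O ∈ NegS (H Z) := by simp [NegS, h0, hOne]
      have m2 : O ∈ NegS (H p) := by simp [NegS, hHp, hOne]
      have e1 := hcorr Z O m1
      have e2 := hcorr p O m2
      simp only [LPO, Set.mem_singleton_iff] at e1 e2
      rw [if_pos hZzero] at e1
      rw [if_neg hp] at e2
      omega
    · push_neg at h1
      have hHO : ¬ ∀ n, H O n = 0 := by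
        intro h
        obtain ⟨n, hn⟩ := h1 O ⟨0, by simp [hOdef]⟩
        exact hn (h n)
      have mZ : Z ∈ NegS (H O) := by simp [NegS, hZzero, hHO]
      have eZ := hcorr O Z mZ
      simp only [LPO, Set.mem_singleton_iff] at eZ
      rw [if_neg hOne] at eZ
      have mq : ∀ k : ℕ, (fun n => if n = k then 1 else 0) ∈ NegS (H Z) := by
        intro k; simp [NegS, h0, hqk k]
      have eq : ∀ k : ℕ, K (fun n => if n = k then 1 else 0) = 0 := by
        intro k
        have := hcorr Z _ (mq k)
        simp only [LPO, Set.mem_singleton_iff] at this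
        rwa [if_pos hZzero] at this
      have := aux_cont K S hK (Set.mem_iUnion.mpr ⟨O, mZ⟩)
        (fun k => Set.mem_iUnion.mpr ⟨Z, mq k⟩) 1 0 eZ eq
      omega
  · have mZ : Z ∈ NegS (H Z) := by simp [NegS, hZzero, h0]
    have eZ := hcorr Z Z mZ
    simp only [LPO, Set.mem_singleton_iff] at eZ
    rw [if_pos hZzero] at eZ
    by_cases h1 : ∃ p, (¬ ∀ n, p n = 0) ∧ ∀ n, H p n = 0
    · obtain ⟨p, hp, hHp⟩ := h1
      have mq : ∀ k : ℕ, (fun n => if n = k then 1 else 0) ∈ NegS (H p) := by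
        intro k; simp [NegS, hHp, hqk k]
      have eq : ∀ k : ℕ, K (fun n => if n = k then 1 else 0) = 1 := by
        intro k
        have := hcorr p _ (mq k)
        simp only [LPO, Set.mem_singleton_iff] at this
        rwa [if_neg hp] at this
      have := aux_cont K S hK (Set.mem_iUnion.mpr ⟨Z, mZ⟩)
        (fun k => Set.mem_iUnion.mpr ⟨p, mq k⟩) 0 1 eZ eq
      omega
    · push_neg at h1
      have hHO : ¬ ∀ n, H O n = 0 := by
        intro h
        obtain ⟨n, hn⟩ := h1 O ⟨0, by simp [hOdef]⟩
        exact hn (h n)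
      have mZ' : Z ∈ NegS (H O) := by simp [NegS, hZzero, hHO]
      have eZ' := hcorr O Z mZ'
      simp only [LPO, Set.mem_singleton_iff] at eZ'
      rw [if_neg hOne] at eZ'
      omega
end

section
/- Let X and Y be topological spaces and let X/Y be the sum type X ⊕ Y with the layered topology. Then: (i) a point Sum.inl x is isolated in X/Y if and only if x is isolated in X; (ii) a point Sum.inr y is isolated in X/Y if and only if X is empty and y is isolated in Y; consequently, (iii) if X is nonempty, the derived set of the whole space X/Y equals (Sum.inl '' derived set of X) ∪ Set.range Sum.inr, where the derived set of a space is its set of accumulation points. -/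
open Set

/-- The open sets of the layered space `X/Y`: images under `Sum.inl` of opens of `X`,
together with the union of all of `X` with an open of `Y`. -/
def LayeredOpen {X Y : Type*} [TopologicalSpace X] [TopologicalSpace Y]
    (s : Set (X ⊕ Y)) : Prop :=
  (∃ U : Set X, IsOpen U ∧ s = Sum.inl '' U) ∨
  (∃ V : Set Y, IsOpen V ∧ s = Sum.inl '' (univ : Set X) ∪ Sum.inr '' V)

/-- The layered topology on `X ⊕ Y`. -/
def layeredTopology (X Y : Type*) [TopologicalSpace X] [TopologicalSpace Y] :
    TopologicalSpace (X ⊕ Y) where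
  IsOpen := LayeredOpen
  isOpen_univ := Or.inr ⟨univ, isOpen_univ, by ext z; cases z <;> simp⟩
  isOpen_inter := by
    rintro s t (⟨U1, hU1, rfl⟩ | ⟨V1, hV1, rfl⟩) (⟨U2, hU2, rfl⟩ | ⟨V2, hV2, rfl⟩)
    · exact Or.inl ⟨U1 ∩ U2, hU1.inter hU2,
        by rw [image_inter Sum.inl_injective]⟩
    · exact Or.inl ⟨U1, hU1, by ext z; cases z <;> simp⟩
    · exact Or.inl ⟨U2, hU2, by ext z; cases z <;> simp⟩
    · exact Or.inr ⟨V1 ∩ V2, hV1.inter hV2, by ext z; cases z <;> simp⟩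
  isOpen_sUnion := by
    intro S hS
    by_cases h : ∃ s ∈ S, ∃ V : Set Y, IsOpen V ∧
        s = Sum.inl '' (univ : Set X) ∪ Sum.inr '' V
    · refine Or.inr ⟨{y | Sum.inr y ∈ ⋃₀ S}, ?_, ?_⟩
      · have he : {y : Y | Sum.inr y ∈ ⋃₀ S} = ⋃ s ∈ S, {y | Sum.inr y ∈ s} := by
          ext y; simp
        rw [he]
        refine isOpen_biUnion fun s hs => ?_
        rcases hS s hs with ⟨U, hU, rfl⟩ | ⟨V, hV, rfl⟩
        · convert isOpen_empty using 1
          ext y; simp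
        · convert hV using 1
          ext y; simp
      · obtain ⟨s₀, hs₀S, V₀, -, rfl⟩ := h
        ext z
        cases z with
        | inl x =>
          simp only [mem_sUnion, mem_union, mem_image, mem_setOf_eq]
          constructor
          · intro _; left; exact ⟨x, trivial, rfl⟩
          · rintro (⟨x', -, hx'⟩ | ⟨y, -, hy⟩)
            · exact ⟨_, hs₀S, Or.inl ⟨x, trivial, rfl⟩⟩
            · exact absurd hy (by simp)
        | inr y =>
          simp only [mem_sUnion, mem_union, mem_image, mem_setOf_eq]
          constructor
          · intro hy; right; exact ⟨y, hy, rfl⟩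
          · rintro (⟨x, -, hx⟩ | ⟨y', hy', hy'e⟩)
            · exact absurd hx (by simp)
            · obtain ⟨s, hsS, hs⟩ := hy'
              cases Sum.inr_injective hy'e
              exact ⟨s, hsS, hs⟩
    · refine Or.inl ⟨{x | Sum.inl x ∈ ⋃₀ S}, ?_, ?_⟩
      · have he : {x : X | Sum.inl x ∈ ⋃₀ S} = ⋃ s ∈ S, {x | Sum.inl x ∈ s} := by
          ext x; simp
        rw [he]
        refine isOpen_biUnion fun s hs => ?_
        rcases hS s hs with ⟨U, hU, rfl⟩ | ⟨V, hV, rfl⟩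
        · convert hU using 1
          ext x; simp
        · exact absurd ⟨_, hs, V, hV, rfl⟩ h
      · ext z
        cases z with
        | inl x =>
          simp only [mem_image, mem_setOf_eq]
          constructor
          · intro hx; exact ⟨x, hx, rfl⟩
          · rintro ⟨x', hx', hx'e⟩; cases Sum.inl_injective hx'e; exact hx'
        | inr y =>
          simp only [mem_image, mem_setOf_eq]
          constructor
          · intro hy
            obtain ⟨s, hsS, hs⟩ := hy
            rcases hS s hsS with ⟨U, -, rfl⟩ | ⟨V, hV, rfl⟩
            · exact absurd hs (by simp)
            · exact absurd ⟨_, hsS, V, hV, rfl⟩ h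
          · rintro ⟨x, -, hx⟩; exact absurd hx (by simp)

/-- The derived set of `S` with respect to an explicitly given topology `t`:
points all of whose open neighbourhoods meet `S` in a point other than themselves. -/
def derivedIn {Z : Type*} (t : TopologicalSpace Z) (S : Set Z) : Set Z :=
  {z | ∀ U : Set Z, t.IsOpen U → z ∈ U → ∃ w ∈ U ∩ S, w ≠ z}

theorem layered_isolated_points_and_derived_set
    {X Y : Type*} [TopologicalSpace X] [TopologicalSpace Y] :
    (∀ x : X, (layeredTopology X Y).IsOpen {Sum.inl x} ↔ IsOpen {x}) ∧
    (∀ y : Y, (layeredTopology X Y).IsOpen {(Sum.inr y : X ⊕ Y)} ↔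
      (IsEmpty X ∧ IsOpen {y})) ∧
    (Nonempty X →
      derivedIn (layeredTopology X Y) (univ : Set (X ⊕ Y)) =
        Sum.inl '' derivedIn ‹TopologicalSpace X› (univ : Set X) ∪
          Set.range (Sum.inr : Y → X ⊕ Y)) := by

  refine ⟨?_, ?_, ?_⟩
  · intro x
    constructor
    · rintro (⟨U, hU, hUe⟩ | ⟨V, hV, hVe⟩)
      · have : U = {x} := by
          ext x'
          constructor
          · intro hx'
            have : Sum.inl x' ∈ ({Sum.inl x} : Set (X ⊕ Y)) := hUe ▸ (⟨x', hx', rfl⟩ : Sum.inl x' ∈ (Sum.inl '' U : Set (X ⊕ Y)))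
            simpa using this
          · rintro rfl
            have : Sum.inl x' ∈ (Sum.inl '' U : Set (X ⊕ Y)) := by rw [← hUe]; exact rfl
            obtain ⟨x'', hx'', he⟩ := this
            cases Sum.inl_injective he; exact hx''
        exact this ▸ hU
      · have hu : (univ : Set X) = {x} := by
          ext x'
          simp only [mem_univ, mem_singleton_iff, true_iff]
          have : Sum.inl x' ∈ ({Sum.inl x} : Set (X ⊕ Y)) :=
            hVe ▸ Or.inl ⟨x', trivial, rfl⟩
          simpa using this
        rw [← hu]; exact isOpen_univ
    · intro hx
      exact Or.inl ⟨{x}, hx, by ext z; cases z <;> simp⟩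
  · intro y
    constructor
    · rintro (⟨U, hU, hUe⟩ | ⟨V, hV, hVe⟩)
      · exfalso
        have : Sum.inr y ∈ Sum.inl '' U := hUe ▸ rfl
        simpa using this
      · have hX : IsEmpty X := by
          refine ⟨fun x => ?_⟩
          have : Sum.inl x ∈ ({Sum.inr y} : Set (X ⊕ Y)) :=
            hVe ▸ Or.inl ⟨x, trivial, rfl⟩
          simpa using this
        have hV' : V = {y} := by
          ext y'
          constructor
          · intro hy'
            have : Sum.inr y' ∈ ({Sum.inr y} : Set (X ⊕ Y)) :=
              hVe ▸ Or.inr ⟨y', hy', rfl⟩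
            simpa using this
          · rintro rfl
            have : Sum.inr y' ∈ Sum.inl '' (univ : Set X) ∪ Sum.inr '' V := by rw [← hVe]; exact rfl
            rcases this with ⟨x, -, hx⟩ | ⟨y'', hy'', he⟩
            · exact absurd hx (by simp)
            · cases Sum.inr_injective he; exact hy''
        exact ⟨hX, hV' ▸ hV⟩
    · rintro ⟨hX, hy⟩
      refine Or.inr ⟨{y}, hy, ?_⟩
      ext z
      cases z with
      | inl x => exact (hX.false x).elim
      | inr y' => simp
  · rintro ⟨x₀⟩
    ext z
    cases z with
    | inl x =>
      simp only [derivedIn, mem_setOf_eq, mem_union, mem_image, mem_range]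
      constructor
      · intro h
        refine Or.inl ⟨x, fun U hU hxU => ?_, rfl⟩
        obtain ⟨w, ⟨hwU, -⟩, hw⟩ := h (Sum.inl '' U) (Or.inl ⟨U, hU, rfl⟩)
          ⟨x, hxU, rfl⟩
        obtain ⟨x', hx', rfl⟩ := hwU
        exact ⟨x', ⟨hx', trivial⟩, fun he => hw (by rw [he])⟩
      · rintro (⟨x', hx', he⟩ | ⟨y, hy⟩)
        · cases Sum.inl_injective he
          intro s hs hxs
          have hop : IsOpen {a : X | Sum.inl a ∈ s} := by
            rcases hs with ⟨U, hU, rfl⟩ | ⟨V, hV, rfl⟩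
            · convert hU using 1; ext a; simp
            · convert isOpen_univ using 1; ext a; simp
          obtain ⟨w, ⟨hws, -⟩, hw⟩ := hx' _ hop hxs
          exact ⟨Sum.inl w, ⟨hws, trivial⟩, fun he => hw (Sum.inl_injective he)⟩
        · exact absurd hy (by simp)
    | inr y =>
      simp only [derivedIn, mem_setOf_eq, mem_union, mem_image, mem_range]
      constructor
      · intro _; exact Or.inr ⟨y, rfl⟩
      · intro _
        intro s hs hys
        rcases hs with ⟨U, hU, rfl⟩ | ⟨V, hV, rfl⟩
        · exact absurd hys (by simp)
        · exact ⟨Sum.inl x₀, ⟨Or.inl ⟨x₀, trivial, rfl⟩, trivial⟩, by simp⟩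
end

section
/- ACC_ℕ is discontinuous: there is no function F : (ℕ→ℕ) → ℕ (ℕ discrete) continuous on dom ACC_ℕ with F p ∈ ACC_ℕ p for all p ∈ dom ACC_ℕ. -/
/-!
A realizer `F` continuous at the zero sequence must commit to the answer `m = F 0` after reading
finitely many entries. The sequences with a single entry `m + 1`, placed ever further out, converge
to zero inside the domain, so `F` answers `m` on one of them, and that answer is wrong.
-/

open Filter Topology

theorem tendsto_pi_single_cofinite {ι β : Type*} [DecidableEq ι] [Zero β] [TopologicalSpace β]
    (c : β) : Tendsto (fun i : ι => (Pi.single i c : ι → β)) cofinite (𝓝 0) :=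
  tendsto_pi_nhds.2 fun j => tendsto_const_nhds.congr'
    ((eventually_cofinite_ne j).mono fun _ hi => by simp [hi.symm])

theorem mem_domFO_of_mem {f : (ℕ → ℕ) → Set ℕ} {p : ℕ → ℕ} {n : ℕ} (h : n ∈ f p) :
    p ∈ domFO f :=
  Set.nonempty_iff_ne_empty.1 ⟨n, h⟩

theorem mem_ACCN_zero (k : ℕ) : k ∈ ACCN 0 :=
  ⟨fun _ _ hi => absurd rfl hi, fun _ => (Nat.succ_ne_zero k).symm⟩

theorem mem_ACCN_single_succ_iff {n m k : ℕ} :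
    k ∈ ACCN (Pi.single n (m + 1)) ↔ k ≠ m := by
  constructor
  · rintro ⟨-, hk⟩ rfl
    exact hk n (by simp)
  · refine fun hkm => ⟨fun i j hi hj => ?_, fun i => ?_⟩
    · obtain rfl : i = n := by by_contra h; simp [h] at hi
      obtain rfl : j = i := by by_contra h; simp [h] at hj
      rfl
    · by_cases h : i = n <;> simp [h, hkm.symm]

theorem accn_discontinuous :
    ¬ ∃ F : (ℕ → ℕ) → ℕ,
      ContinuousOn F (domFO ACCN) ∧ ∀ p ∈ domFO ACCN, F p ∈ ACCN p := by
  rintro ⟨F, hF, hsol⟩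
  set m := F 0
  have hq : ∀ n, Pi.single n (m + 1) ∈ domFO ACCN := fun n =>
    mem_domFO_of_mem (mem_ACCN_single_succ_iff.2 (Nat.succ_ne_self m))
  have hlim : Tendsto (fun n => Pi.single n (m + 1)) cofinite (𝓝[domFO ACCN] 0) :=
    tendsto_nhdsWithin_iff.2 ⟨tendsto_pi_single_cofinite _, .of_forall hq⟩
  have hFq : Tendsto (fun n => F (Pi.single n (m + 1))) cofinite (pure m) :=
    nhds_discrete ℕ ▸ (hF 0 (mem_domFO_of_mem (mem_ACCN_zero 0))).tendsto.comp hlim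
  obtain ⟨n, hn⟩ := (tendsto_pure.1 hFq).exists
  exact mem_ACCN_single_succ_iff.1 (hsol _ (hq n)) hn
end
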